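/- arXiv:2008.02138 — 2 statements merged into one kernel-verified Lean document; each statement's English description precedes it below -/
import Mathlib

section
/- Let n be a power of 2, m > n, and let 0 ≤ t < log n. For every t-bit restriction ρ, every Resolution refutation of BinPHP^m_n↾ρ has size at least e^{n/(2^{t+1}·2(log n − t))}. In particular (taking t = 0), every Resolution refutation of BinPHP^m_n has size at least e^{n/(4 log n)}. -/
open scoped Classical

namespace PC

abbrev Lit (V : Type) := V × Bool
abbrev Clause (V : Type) := Finset (Lit V)
abbrev Cnf (V : Type) := Set (Clause V)
abbrev Dnf (V : Type) := Finset (Finset (Lit V))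
abbrev Conj (V : Type) := Finset (Lit V)
abbrev Restriction (V : Type) := V → Option Bool

def Lit.negate {V : Type} (l : Lit V) : Lit V := (l.1, !l.2)

section Res

variable {V : Type} [DecidableEq V]

/-- One step of a (dag-like) Resolution derivation: an axiom of `F`, a resolvent
of two previous clauses, or a weakening of a previous clause. -/
def ResStep (F : Cnf V) (prev : List (Clause V)) (C : Clause V) : Prop :=
  C ∈ F ∨
    (∃ C₁ ∈ prev, ∃ C₂ ∈ prev, ∃ x : V,
      (x, true) ∈ C₁ ∧ (x, false) ∈ C₂ ∧
      C = C₁.erase (x, true) ∪ C₂.erase (x, false)) ∨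
    (∃ C' ∈ prev, ∃ l : Lit V, C = insert l C')

/-- A Resolution refutation of `F`: a sequence of clauses, each an axiom or
derived from earlier ones, ending with the empty clause.  Its size is the
length of the list. -/
def IsResRefutation (F : Cnf V) (π : List (Clause V)) : Prop :=
  (∀ i : Fin π.length, ResStep F (π.take i.val) (π.get i)) ∧
  π.getLast? = some (∅ : Clause V)

/-- One step of a `Res(s)` derivation on `s`-DNFs (sets of terms, each a set of literals):
an axiom clause of `F` (viewed as a DNF of singleton terms), ∧-introduction, cut,
or one of the two weakening rules. -/
def ResSStep (s : ℕ) (F : Cnf V) (prev : List (Dnf V)) (D : Dnf V) : Prop :=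
  (∃ C ∈ F, D = C.image fun l => ({l} : Finset (Lit V))) ∨
  (∃ A ∈ prev, ∃ B ∈ prev, ∃ D₁ D₂ : Dnf V, ∃ T₁ T₂ : Finset (Lit V),
      A = insert T₁ D₁ ∧ B = insert T₂ D₂ ∧ (T₁ ∪ T₂).card ≤ s ∧
      D = insert (T₁ ∪ T₂) (D₁ ∪ D₂)) ∨
  (∃ A ∈ prev, ∃ B ∈ prev, ∃ D₁ D₂ : Dnf V, ∃ J : Finset (Lit V),
      A = D₁ ∪ J.image (fun l => ({l} : Finset (Lit V))) ∧
      B = insert (J.image Lit.negate) D₂ ∧ D = D₁ ∪ D₂) ∨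
  (∃ A ∈ prev, ∃ T : Finset (Lit V), T.card ≤ s ∧ D = insert T A) ∨
  (∃ A ∈ prev, ∃ D' : Dnf V, ∃ T T' : Finset (Lit V),
      A = insert T D' ∧ T' ⊆ T ∧ D = insert T' D')

/-- A `Res(s)` refutation of `F`: a sequence of `s`-DNFs, each an axiom or derived
from earlier lines, ending with the empty DNF.  Its size is the length of the list. -/
def IsResSRefutation (s : ℕ) (F : Cnf V) (π : List (Dnf V)) : Prop :=
  (∀ D ∈ π, ∀ t ∈ D, t.card ≤ s) ∧
  (∀ i : Fin π.length, ResSStep s F (π.take i.val) (π.get i)) ∧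
  π.getLast? = some (∅ : Dnf V)

/-- Applying a partial assignment to a clause: `none` if the clause is satisfied,
otherwise the clause with the falsified literals removed. -/
noncomputable def restrictClause (ρ : Restriction V) (C : Clause V) : Option (Clause V) :=
  if ∃ l ∈ C, ρ l.1 = some l.2 then none
  else some (C.filter fun l => ρ l.1 = none)

/-- The restriction of a CNF by a partial assignment. -/
def restrictCnf (ρ : Restriction V) (F : Cnf V) : Cnf V :=
  {C' | ∃ C ∈ F, restrictClause ρ C = some C'}

/-- A tuple of literals survives a restriction if the restriction does not set
all of its literals to false. -/
def Survives {s : ℕ} (σ : Restriction V) (S : Fin s → Lit V) : Prop :=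
  ¬ ∀ i : Fin s, σ (S i).1 = some (!(S i).2)

/-- Treelike Resolution refutations, as derivation trees. -/
inductive ResTree (F : Cnf V) : Clause V → Type where
  | ax {C : Clause V} (h : C ∈ F) : ResTree F C
  | res {C₁ C₂ : Clause V} (x : V) (h₁ : (x, true) ∈ C₁) (h₂ : (x, false) ∈ C₂)
      (t₁ : ResTree F C₁) (t₂ : ResTree F C₂) :
      ResTree F (C₁.erase (x, true) ∪ C₂.erase (x, false))
  | weak {C : Clause V} (l : Lit V) (t : ResTree F C) : ResTree F (insert l C)

/-- The size (number of clauses) of a treelike Resolution derivation. -/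
def ResTree.size {F : Cnf V} : {C : Clause V} → ResTree F C → ℕ
  | _, .ax _ => 1
  | _, .res _ _ _ t₁ t₂ => t₁.size + t₂.size + 1
  | _, .weak _ t => t.size + 1

/-- Feasibility of the subsystem of the rank-`r` Sherali–Adams polytope of the CNF `F`
consisting of those constraints all of whose variables `Z_D` have `D ∈ T`. -/
def SAFeasibleOn (F : Cnf V) (r : ℕ) (T : Set (Conj V)) : Prop :=
  ∃ Z : Conj V → ℝ,
    Z ∅ = 1 ∧
    (∀ l : Lit V, ∀ D : Conj V, D.card ≤ r → D ∈ T → insert l D ∈ T →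
        0 ≤ Z (insert l D) ∧ Z (insert l D) ≤ Z D) ∧
    (∀ l : Lit V, ∀ D : Conj V, D.card ≤ r → D ∈ T → insert l D ∈ T →
        insert (Lit.negate l) D ∈ T →
        Z (insert l D) + Z (insert (Lit.negate l) D) = Z D) ∧
    (∀ C ∈ F, ∀ D : Conj V, D.card ≤ r → D ∈ T → (∀ l ∈ C, insert l D ∈ T) →
        Z D ≤ ∑ l ∈ C, Z (insert l D))

end Res

section ML

variable {V : Type} [DecidableEq V]

/-- Multilinear real polynomials over the variables `V`, represented by their
coefficients on the square-free monomials. -/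
abbrev MLPoly (V : Type) := Finset V →₀ ℝ

/-- Multilinear product of multilinear polynomials (i.e. product in `ℝ[V]/(v² - v)`). -/
noncomputable def mlMul (p q : MLPoly V) : MLPoly V :=
  p.sum fun S a => q.sum fun S' b => Finsupp.single (S ∪ S') (a * b)

/-- Degree of a multilinear polynomial. -/
def mlDeg (p : MLPoly V) : ℕ := p.support.sup Finset.card

/-- All coefficients are nonnegative. -/
def NonnegCoeffs (p : MLPoly V) : Prop := ∀ S : Finset V, 0 ≤ p S

/-- The polynomial of a literal: `v`, respectively `1 - v`. -/
noncomputable def litPoly (l : Lit V) : MLPoly V :=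
  if l.2 then Finsupp.single {l.1} 1 else Finsupp.single ∅ 1 - Finsupp.single {l.1} 1

/-- The translation of the clause `l₁ ∨ … ∨ l_k` into the polynomial `l₁ + … + l_k - 1`
(whose nonnegativity expresses the clause). -/
noncomputable def clausePoly (C : Clause V) : MLPoly V :=
  (∑ l ∈ C, litPoly l) - Finsupp.single ∅ 1

/-- The constant polynomial `1`. -/
noncomputable def onePoly (V : Type) [DecidableEq V] : MLPoly V := Finsupp.single ∅ 1

end ML

/-! ### The binary Pigeonhole principle -/

/-- The literals `ω_{i,1}^{1-a₁} ∨ … ∨ ω_{i,L}^{1-a_L}` saying that pigeon `i` does not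
go to hole `a` (given in binary). -/
def pigeonLits (m L : ℕ) (i : Fin m) (a : ℕ) : Clause (Fin m × Fin L) :=
  Finset.univ.image fun j : Fin L => (((i, j) : Fin m × Fin L), !(a.testBit j.val))

/-- The binary pigeonhole principle with `m` pigeons and `n = 2^L` holes. -/
def BinPHP (m L : ℕ) : Cnf (Fin m × Fin L) :=
  {C | ∃ i i' : Fin m, i ≠ i' ∧ ∃ a : Fin (2 ^ L),
      C = pigeonLits m L i a.val ∪ pigeonLits m L i' a.val}

/-- The binary pigeonhole principle with `m` pigeons where every pigeon must go to a
hole in `H ⊆ [2^L]`. -/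
def BinPHPH (m L : ℕ) (H : Finset (Fin (2 ^ L))) : Cnf (Fin m × Fin L) :=
  {C | (∃ i i' : Fin m, i ≠ i' ∧ ∃ a ∈ H,
          C = pigeonLits m L i a.val ∪ pigeonLits m L i' a.val) ∨
       (∃ i : Fin m, ∃ a : Fin (2 ^ L), a ∉ H ∧ C = pigeonLits m L i a.val)}

/-- A `t`-bit restriction: exactly `t` bits of each pigeon are assigned. -/
def IsTBitRestriction (t m L : ℕ) (ρ : Restriction (Fin m × Fin L)) : Prop :=
  ∀ i : Fin m, (Finset.univ.filter fun j : Fin L => ρ (i, j) ≠ none).card = t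

/-- An `s`-bit restriction over the restriction `ρ`: exactly `s` bits of each pigeon,
all of them unassigned by `ρ`, are assigned. -/
def IsSBitOver (s m L : ℕ) (ρ σ : Restriction (Fin m × Fin L)) : Prop :=
  (∀ i : Fin m, (Finset.univ.filter fun j : Fin L => σ (i, j) ≠ none).card = s) ∧
  ∀ v : Fin m × Fin L, σ v ≠ none → ρ v = none

/-! ### The clique formulas -/

/-- A graph on `[k] × [n]` is `k`-partite if its edges join vertices in distinct blocks. -/
def KPartite {k n : ℕ} (G : SimpleGraph (Fin k × Fin n)) : Prop :=
  ∀ u v : Fin k × Fin n, G.Adj u v → u.1 ≠ v.1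

/-- The literals `ω_{i,1}^{1-a₁} ∨ … ∨ ω_{i,L}^{1-a_L}` saying that the vertex selected
in block `i` is not vertex `a` (given in binary). -/
def blockLits (k L : ℕ) (i : Fin k) (a : ℕ) : Clause (Fin k × Fin L) :=
  Finset.univ.image fun j : Fin L => (((i, j) : Fin k × Fin L), !(a.testBit j.val))

/-- The binary `k`-clique formula of a `k`-partite graph `G` (with `n = 2^L`). -/
def BinClique (L : ℕ) {k n : ℕ} (G : SimpleGraph (Fin k × Fin n)) : Cnf (Fin k × Fin L) :=
  {C | ∃ i j : Fin k, ∃ a b : Fin n, i ≠ j ∧ ¬ G.Adj (i, a) (j, b) ∧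
      C = blockLits k L i a.val ∪ blockLits k L j b.val}

/-- The unary `k`-clique formula of a `k`-partite graph `G`. -/
def UnClique {k n : ℕ} (G : SimpleGraph (Fin k × Fin n)) : Cnf (Fin k × Fin n) :=
  {C | (∃ i j : Fin k, ∃ a b : Fin n, i ≠ j ∧ ¬ G.Adj (i, a) (j, b) ∧
          C = ({(((i, a) : Fin k × Fin n), false), (((j, b) : Fin k × Fin n), false)} :
            Clause (Fin k × Fin n))) ∨
       (∃ i : Fin k, C = Finset.univ.image fun a : Fin n => (((i, a) : Fin k × Fin n), true))}

/-- An `α`-transversal set of vertices: `⌊αk⌋` vertices, at most one per block. -/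
def AlphaTransversal (α : ℝ) {k n : ℕ} (U : Finset (Fin k × Fin n)) : Prop :=
  U.card = ⌊α * (k : ℝ)⌋₊ ∧ ∀ u ∈ U, ∀ v ∈ U, u.1 = v.1 → u = v

/-- A `β`-total restriction: exactly `⌊β log n⌋` bits of each block are assigned. -/
def BTotal (β : ℝ) (k L : ℕ) (σ : Restriction (Fin k × Fin L)) : Prop :=
  ∀ b : Fin k, (Finset.univ.filter fun j : Fin L => σ (b, j) ≠ none).card = ⌊β * (L : ℝ)⌋₊

/-- A restriction is consistent with vertex `a` of block `i` if on every bit of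
block `i` it is unassigned or agrees with the binary representation of `a`. -/
def ConsistentWith {k L : ℕ} (σ : Restriction (Fin k × Fin L)) (i : Fin k) (a : ℕ) : Prop :=
  ∀ j : Fin L, σ (i, j) = none ∨ σ (i, j) = some (a.testBit j.val)

/-- `U` is `β`-extendable: every `β`-total restriction is consistent with some common
neighbour of `U` in every block not meeting `U`. -/
def BExtendable (β : ℝ) (L : ℕ) {k n : ℕ} (G : SimpleGraph (Fin k × Fin n))
    (U : Finset (Fin k × Fin n)) : Prop :=
  ∀ σ : Restriction (Fin k × Fin L), BTotal β k L σ →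
    ∀ b : Fin k, (∀ u ∈ U, u.1 ≠ b) →
      ∃ a : Fin n, (∀ u ∈ U, G.Adj (b, a) u) ∧ ConsistentWith σ b a.val

/-- An `s`-restriction: exactly `⌊log n / 2^(s+1)⌋` bits of each block are assigned. -/
def IsSRestriction (s k L : ℕ) (ρ : Restriction (Fin k × Fin L)) : Prop :=
  ∀ i : Fin k, (Finset.univ.filter fun j : Fin L => ρ (i, j) ≠ none).card = L / 2 ^ (s + 1)

/-! ### Numerical functions -/

def pe (s : ℕ) : ℕ := 2 ^ (s ^ 2 + 3 * s)

def de (s : ℕ) : ℕ := (s * pe s) ^ s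

noncomputable def deltaC : ℝ := 1 / (2 * 96 ^ 2)

def xi : ℕ → ℕ
  | 0 => 0
  | 1 => 1
  | s + 2 => xi (s + 1) + 1 + (s + 2)

/-! ### The binary ordering principle -/

/-- Variables of `Bin-OP_n`: order variables `ν_{i,j}` and witness bits `ω_{j,ℓ}`. -/
abbrev OPV (n L : ℕ) := Sum (Fin n × Fin n) (Fin n × Fin L)

/-- The binary ordering principle `Bin-OP_n` (with `n = 2^L`). -/
def BinOP (n L : ℕ) : Cnf (OPV n L) :=
  {C | (∃ i : Fin n, C = ({((Sum.inl (i, i) : OPV n L), false)} : Clause (OPV n L))) ∨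
       (∃ i j k : Fin n, C = ({((Sum.inl (i, j) : OPV n L), false),
          ((Sum.inl (j, k) : OPV n L), false),
          ((Sum.inl (i, k) : OPV n L), true)} : Clause (OPV n L))) ∨
       (∃ j a : Fin n, C = insert ((Sum.inl (a, j) : OPV n L), true)
          (Finset.univ.image fun ℓ : Fin L =>
            (((Sum.inr (j, ℓ)) : OPV n L), !(a.val.testBit ℓ.val))))}

/-! ### The (linear) ordering principle, for Sherali–Adams with equalities -/

/-- Variables of the (unary) ordering principle: `v_{i,j}` (inl) and `w_{i,j}` (inr). -/
abbrev OPW (n : ℕ) := Sum (Fin n × Fin n) (Fin n × Fin n)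

def vLit (n : ℕ) (i j : Fin n) : Lit (OPW n) := (Sum.inl (i, j), true)

def wLit (n : ℕ) (i j : Fin n) : Lit (OPW n) := (Sum.inr (i, j), true)

/-- Feasibility of the subsystem of the rank-`r` Sherali–Adams polytope of the ordering
principle with equality, consisting of the constraints with all variables in `T`. -/
def OPEqFeasibleOn (n r : ℕ) (T : Set (Conj (OPW n))) : Prop :=
  ∃ Z : Conj (OPW n) → ℝ,
    Z ∅ = 1 ∧
    (∀ l : Lit (OPW n), ∀ D : Conj (OPW n), D.card ≤ r → D ∈ T → insert l D ∈ T →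
        0 ≤ Z (insert l D) ∧ Z (insert l D) ≤ Z D) ∧
    (∀ l : Lit (OPW n), ∀ D : Conj (OPW n), D.card ≤ r → D ∈ T → insert l D ∈ T →
        insert (Lit.negate l) D ∈ T →
        Z (insert l D) + Z (insert (Lit.negate l) D) = Z D) ∧
    (∀ i : Fin n, ∀ D : Conj (OPW n), D.card ≤ r → D ∈ T → insert (vLit n i i) D ∈ T →
        Z (insert (vLit n i i) D) = 0) ∧
    (∀ i j k : Fin n, ∀ D : Conj (OPW n), D.card ≤ r → D ∈ T →
        insert (vLit n i k) D ∈ T → insert (vLit n i j) D ∈ T → insert (vLit n j k) D ∈ T →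
        Z (insert (vLit n i j) D) + Z (insert (vLit n j k) D) ≤
          Z (insert (vLit n i k) D) + Z D) ∧
    (∀ i j : Fin n, ∀ D : Conj (OPW n), D.card ≤ r → D ∈ T →
        insert (vLit n i j) D ∈ T → insert (wLit n i j) D ∈ T →
        Z (insert (wLit n i j) D) ≤ Z (insert (vLit n i j) D)) ∧
    (∀ j : Fin n, ∀ D : Conj (OPW n), D.card ≤ r → D ∈ T →
        (∀ i : Fin n, insert (wLit n i j) D ∈ T) →
        (∑ i : Fin n, Z (insert (wLit n i j) D)) = Z D)

/-- The monomial `v_{i,j}` as a multilinear polynomial. -/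
noncomputable def vPoly (n : ℕ) (i j : Fin n) : MLPoly (OPW n) :=
  Finsupp.single {Sum.inl (i, j)} 1

/-- The monomial `w_{i,j}` as a multilinear polynomial. -/
noncomputable def wPoly (n : ℕ) (i j : Fin n) : MLPoly (OPW n) :=
  Finsupp.single {Sum.inr (i, j)} 1

/-- The axioms of the linear ordering principle `LOP_n` as linear polynomials `q`
(each axiom being the inequality `q ≥ 0`). -/
def LOPpolys (n : ℕ) : Set (MLPoly (OPW n)) :=
  {p | (∃ i : Fin n, p = vPoly n i i) ∨ (∃ i : Fin n, p = -vPoly n i i) ∨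
       (∃ i j k : Fin n, p = vPoly n i k - vPoly n i j - vPoly n j k + onePoly (OPW n)) ∨
       (∃ i j : Fin n, p = vPoly n i j - wPoly n i j) ∨
       (∃ i j : Fin n, i ≠ j ∧ p = vPoly n i j + vPoly n j i - onePoly (OPW n)) ∨
       (∃ j : Fin n, p = (∑ i : Fin n, wPoly n i j) - onePoly (OPW n))}


/-! ### Auxiliary material for the Resolution lower bound -/

section LowerBoundAux

variable {V : Type} [DecidableEq V]

lemma restrictClause_eq_some_iff {ρ : Restriction V} {C C' : Clause V}
    (h : restrictClause ρ C = some C') :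
    (∀ l ∈ C, ρ l.1 ≠ some l.2) ∧ C' = C.filter fun l => ρ l.1 = none := by
  by_cases hs : ∃ l ∈ C, ρ l.1 = some l.2
  · rw [restrictClause, if_pos hs] at h; exact absurd h (by simp)
  · rw [restrictClause, if_neg hs] at h
    push_neg at hs
    exact ⟨hs, (Option.some.inj h).symm⟩

lemma restrictClause_eq_some_of_not {ρ : Restriction V} {C : Clause V}
    (h : ∀ l ∈ C, ρ l.1 ≠ some l.2) :
    restrictClause ρ C = some (C.filter fun l => ρ l.1 = none) := by
  rw [restrictClause, if_neg]; push_neg; exact h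

lemma restrictClause_eq_none {ρ : Restriction V} {C : Clause V} {l : Lit V}
    (hl : l ∈ C) (h : ρ l.1 = some l.2) : restrictClause ρ C = none := by
  rw [restrictClause, if_pos ⟨l, hl, h⟩]

lemma restrictClause_empty (ρ : Restriction V) :
    restrictClause ρ (∅ : Clause V) = some (∅ : Clause V) := by
  rw [restrictClause, if_neg (by simp)]
  simp

lemma ResStep.mono_cnf {F F' : Cnf V} (h : F ⊆ F') {prev : List (Clause V)} {C : Clause V}
    (hs : ResStep F prev C) : ResStep F' prev C := by
  rcases hs with h1 | h2 | h3
  · exact Or.inl (h h1)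
  · exact Or.inr (Or.inl h2)
  · exact Or.inr (Or.inr h3)

lemma exists_get_of_mem_take {α : Type*} {l : List α} {k : ℕ} {a : α} (h : a ∈ l.take k) :
    ∃ j : Fin l.length, j.val < k ∧ l.get j = a := by
  obtain ⟨j, hj, hja⟩ := List.getElem_of_mem h
  rw [List.length_take] at hj
  have hj1 : j < k := lt_of_lt_of_le hj (min_le_left _ _)
  have hj2 : j < l.length := lt_of_lt_of_le hj (min_le_right _ _)
  refine ⟨⟨j, hj2⟩, hj1, ?_⟩
  rw [← hja, List.getElem_take]
  rfl

lemma deriv_snoc {F : Cnf V} {π₁ : List (Clause V)}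
    (h : ∀ i : Fin π₁.length, ResStep F (π₁.take i.val) (π₁.get i)) {D : Clause V}
    (hD : ResStep F π₁ D) :
    ∀ i : Fin (π₁ ++ [D]).length, ResStep F ((π₁ ++ [D]).take i.val) ((π₁ ++ [D]).get i) := by
  rintro ⟨i, hi⟩
  have hi' : i < π₁.length + 1 := by simpa using hi
  rcases lt_or_eq_of_le (Nat.lt_succ_iff.mp hi') with hlt | heq
  · have htake : (π₁ ++ [D]).take i = π₁.take i :=
      List.take_append_of_le_length (le_of_lt hlt)
    have hget : (π₁ ++ [D]).get ⟨i, hi⟩ = π₁.get ⟨i, hlt⟩ := by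
      simp [List.get_eq_getElem, List.getElem_append_left hlt]
    rw [htake, hget]
    exact h ⟨i, hlt⟩
  · subst heq
    have htake : (π₁ ++ [D]).take π₁.length = π₁ := List.take_left
    have hget : (π₁ ++ [D]).get ⟨π₁.length, hi⟩ = D := by
      simp [List.get_eq_getElem]
    rw [htake, hget]
    exact hD

/-- Combining two restrictions with disjoint supports. -/
def combineR (ρ σ : Restriction V) : Restriction V := fun v =>
  match ρ v with
  | some b => some b
  | none => σ v

lemma combineR_eq_none_iff {ρ σ : Restriction V} {v : V} :
    combineR ρ σ v = none ↔ ρ v = none ∧ σ v = none := by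
  cases h : ρ v <;> simp [combineR, h]

lemma combineR_eq_some_iff {ρ σ : Restriction V} {v : V} {b : Bool} :
    combineR ρ σ v = some b ↔ ρ v = some b ∨ (ρ v = none ∧ σ v = some b) := by
  cases h : ρ v <;> simp [combineR, h]

lemma restrictCnf_comp_subset (ρ σ : Restriction V) (F : Cnf V) :
    restrictCnf σ (restrictCnf ρ F) ⊆ restrictCnf (combineR ρ σ) F := by
  rintro C'' ⟨C', ⟨C₀, hC₀, h1⟩, h2⟩
  obtain ⟨h1a, h1b⟩ := restrictClause_eq_some_iff h1
  obtain ⟨h2a, h2b⟩ := restrictClause_eq_some_iff h2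
  refine ⟨C₀, hC₀, ?_⟩
  have hns : ∀ l ∈ C₀, combineR ρ σ l.1 ≠ some l.2 := by
    intro l hl hc
    rcases combineR_eq_some_iff.mp hc with hc | ⟨hc1, hc2⟩
    · exact h1a l hl hc
    · exact h2a l (by rw [h1b]; exact Finset.mem_filter.mpr ⟨hl, hc1⟩) hc2
  rw [restrictClause_eq_some_of_not hns]
  congr 1
  rw [h2b, h1b, Finset.filter_filter]
  apply Finset.filter_congr
  intro l _
  simp only [combineR_eq_none_iff]

section WidthAux

variable {m L t' : ℕ}

/-- The pigeons mentioned by a clause on a variable unassigned by `ρ`. -/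
def freePigs (ρ : Restriction (Fin m × Fin L)) (C : Clause (Fin m × Fin L)) : Finset (Fin m) :=
  (C.filter fun l => ρ l.1 = none).image fun l => l.1.1

lemma freePigs_mono {ρ ρ₂ : Restriction (Fin m × Fin L)} {C D : Clause (Fin m × Fin L)}
    (hsub : D ⊆ C) (himp : ∀ v, ρ₂ v = none → ρ v = none) :
    freePigs ρ₂ D ⊆ freePigs ρ C := by
  intro p hp
  obtain ⟨l, hl, rfl⟩ := Finset.mem_image.mp hp
  obtain ⟨hlD, hlnone⟩ := Finset.mem_filter.mp hl
  exact Finset.mem_image.mpr ⟨l, Finset.mem_filter.mpr ⟨hsub hlD, himp _ hlnone⟩, rfl⟩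

/-- Total assignment induced by the fixed restriction plus a partial matching. -/
def asg (ρ' : Restriction (Fin m × Fin L)) (ν : Fin m → Option (Fin L → Bool)) :
    Fin m × Fin L → Option Bool := fun p =>
  (ρ' p).or ((ν p.1).map fun v => v p.2)

def SatBy (ρ' : Restriction (Fin m × Fin L)) (ν : Fin m → Option (Fin L → Bool))
    (C : Clause (Fin m × Fin L)) : Prop := ∃ l ∈ C, asg ρ' ν l.1 = some l.2

def ConsVec (ρ' : Restriction (Fin m × Fin L)) (i : Fin m) (v : Fin L → Bool) : Prop :=
  ∀ j : Fin L, ∀ b : Bool, ρ' (i, j) = some b → v j = b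

def nudom (ν : Fin m → Option (Fin L → Bool)) : Finset (Fin m) :=
  Finset.univ.filter fun i => ν i ≠ none

lemma exists_free_bit {ρ' : Restriction (Fin m × Fin L)} (hρ' : IsTBitRestriction t' m L ρ')
    (hmL : t' < L) (p : Fin m) : ∃ j : Fin L, ρ' (p, j) = none := by
  by_contra h
  push_neg at h
  have he : (Finset.univ.filter fun j : Fin L => ρ' (p, j) ≠ none) = Finset.univ := by
    ext j; simpa using h j
  have := hρ' p
  rw [he, Finset.card_univ, Fintype.card_fin] at this
  omega

lemma card_consVec {ρ' : Restriction (Fin m × Fin L)} (hρ' : IsTBitRestriction t' m L ρ')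
    (i₀ : Fin m) :
    (Finset.univ.filter fun v : Fin L → Bool => ConsVec ρ' i₀ v).card = 2 ^ (L - t') := by
  classical
  set s : Finset (Fin L) := Finset.univ.filter fun j => ρ' (i₀, j) ≠ none with hs
  have hscard : s.card = t' := hρ' i₀
  have h1 : Fintype.card { j : Fin L // j ∉ s } = L - t' := by
    rw [Fintype.card_subtype]
    have he : (Finset.univ.filter fun j : Fin L => j ∉ s) = sᶜ := by ext j; simp
    rw [he, Finset.card_compl, hscard, Fintype.card_fin]
  have htarget : (Finset.univ : Finset ({ j : Fin L // j ∉ s } → Bool)).card = 2 ^ (L - t') := by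
    rw [Finset.card_univ, Fintype.card_fun, Fintype.card_bool, h1]
  rw [← htarget]
  refine Finset.card_bij' (fun v _ => fun j => v j.1)
    (fun f _ => fun j => if hj : j ∈ s then (ρ' (i₀, j)).getD false else f ⟨j, hj⟩)
    ?_ ?_ ?_ ?_
  · intro v _; exact Finset.mem_univ _
  · intro f _
    refine Finset.mem_filter.mpr ⟨Finset.mem_univ _, ?_⟩
    intro j b hjb
    have hj : j ∈ s := by rw [hs]; refine Finset.mem_filter.mpr ⟨Finset.mem_univ _, ?_⟩; rw [hjb]; simp
    dsimp only
    rw [dif_pos hj, hjb]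
    rfl
  · intro v hv
    funext j
    dsimp only
    by_cases hj : j ∈ s
    · rw [dif_pos hj]
      have hne : ρ' (i₀, j) ≠ none := by
        have := Finset.mem_filter.mp (hs ▸ hj)
        exact this.2
      obtain ⟨b, hb⟩ := Option.ne_none_iff_exists'.mp hne
      rw [hb]
      exact ((Finset.mem_filter.mp hv).2 j b hb).symm
    · rw [dif_neg hj]
  · intro f _
    funext j
    dsimp only
    rw [dif_neg j.2]

lemma exists_freshVec {ρ' : Restriction (Fin m × Fin L)} (hρ' : IsTBitRestriction t' m L ρ')
    (i₀ : Fin m) (ν : Fin m → Option (Fin L → Bool))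
    (hcard : (nudom ν).card < 2 ^ (L - t')) :
    ∃ v : Fin L → Bool, ConsVec ρ' i₀ v ∧ ∀ i, ν i ≠ some v := by
  classical
  set Vs := Finset.univ.filter fun v : Fin L → Bool => ConsVec ρ' i₀ v with hVs
  set U := (nudom ν).image (fun i => (ν i).getD (fun _ => false)) with hU
  have hUcard : U.card < Vs.card := by
    calc U.card ≤ (nudom ν).card := Finset.card_image_le
      _ < 2 ^ (L - t') := hcard
      _ = Vs.card := (card_consVec hρ' i₀).symm
  have hns : ¬ Vs ⊆ U := fun h => absurd (Finset.card_le_card h) (not_le.mpr hUcard)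
  obtain ⟨v, hvV, hvU⟩ := Finset.not_subset.mp hns
  refine ⟨v, (Finset.mem_filter.mp hvV).2, ?_⟩
  intro i hi
  apply hvU
  refine Finset.mem_image.mpr ⟨i, ?_, ?_⟩
  · simp [nudom, hi]
  · rw [hi]; rfl

lemma width_invariant {ρ' : Restriction (Fin m × Fin L)} (hmL : t' < L)
    (hρ' : IsTBitRestriction t' m L ρ') (π' : List (Clause (Fin m × Fin L)))
    (hstep : ∀ i : Fin π'.length, ResStep (restrictCnf ρ' (BinPHP m L)) (π'.take i.val) (π'.get i))
    (hnarrow : ∀ C ∈ π', (freePigs ρ' C).card < 2 ^ (L - t')) :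
    ∀ k : ℕ, ∀ hk : k < π'.length, ∀ ν : Fin m → Option (Fin L → Bool),
      (∀ i v, ν i = some v → ConsVec ρ' i v) →
      (∀ i i' v, ν i = some v → ν i' = some v → i = i') →
      (nudom ν).card ≤ 2 ^ (L - t') →
      (∀ i ∈ freePigs ρ' (π'.get ⟨k, hk⟩), ν i ≠ none) →
      SatBy ρ' ν (π'.get ⟨k, hk⟩) := by
  intro k
  induction k using Nat.strong_induction_on with
  | _ k IH =>
  intro hk ν hcons hinj hcard hdom
  have hstepk := hstep ⟨k, hk⟩
  set C := π'.get ⟨k, hk⟩ with hCdef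
  have hCmem : C ∈ π' := by rw [hCdef]; exact List.get_mem π' ⟨k, hk⟩
  rcases hstepk with hax | ⟨C₁, hC₁, C₂, hC₂, x, hx1, hx2, hCeq⟩ | ⟨C₀, hC₀, l, hCeq⟩
  · -- axiom case
    obtain ⟨C₀, hC₀, hres⟩ := hax
    obtain ⟨i, i', hii, a, rfl⟩ := hC₀
    obtain ⟨hns, hCk⟩ := restrictClause_eq_some_iff hres
    have hmemU : ∀ (p : Fin m) (j : Fin L), p = i ∨ p = i' →
        ((p, j), !(a.val.testBit j.val)) ∈ pigeonLits m L i a.val ∪ pigeonLits m L i' a.val := by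
      intro p j hp
      rcases hp with rfl | rfl
      · exact Finset.mem_union_left _ (Finset.mem_image.mpr ⟨j, Finset.mem_univ _, rfl⟩)
      · exact Finset.mem_union_right _ (Finset.mem_image.mpr ⟨j, Finset.mem_univ _, rfl⟩)
    have hlitmem : ∀ (p : Fin m) (j : Fin L), p = i ∨ p = i' → ρ' (p, j) = none →
        ((p, j), !(a.val.testBit j.val)) ∈ C := by
      intro p j hp hfree
      rw [hCk]
      exact Finset.mem_filter.mpr ⟨hmemU p j hp, hfree⟩
    have hpigmem : ∀ p : Fin m, p = i ∨ p = i' → p ∈ freePigs ρ' C := by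
      intro p hp
      obtain ⟨j, hj⟩ := exists_free_bit hρ' hmL p
      exact Finset.mem_image.mpr ⟨_, Finset.mem_filter.mpr ⟨hlitmem p j hp hj, hj⟩, rfl⟩
    obtain ⟨v, hv⟩ := Option.ne_none_iff_exists'.mp (hdom i (hpigmem i (Or.inl rfl)))
    obtain ⟨v', hv'⟩ := Option.ne_none_iff_exists'.mp (hdom i' (hpigmem i' (Or.inr rfl)))
    have key : ∀ (p : Fin m) (w : Fin L → Bool), p = i ∨ p = i' → ν p = some w →
        w ≠ (fun j : Fin L => a.val.testBit j.val) → SatBy ρ' ν C := by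
      intro p w hp hw hwa
      have hex : ∃ j : Fin L, w j ≠ a.val.testBit j.val := by
        by_contra hno; push_neg at hno; exact hwa (funext hno)
      obtain ⟨j, hj⟩ := hex
      have hbool : ∀ x y : Bool, x ≠ !y → x = y := by decide
      have hbool2 : ∀ x y : Bool, x ≠ y → x = !y := by decide
      have hfree : ρ' (p, j) = none := by
        cases hb : ρ' (p, j) with
        | none => rfl
        | some b =>
          exfalso
          have h1 : w j = b := hcons p w hw j b hb
          have h2 := hns _ (hmemU p j hp)
          have h3 : (some b : Option Bool) ≠ some (!(a.val.testBit j.val)) := hb ▸ h2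
          have hb2 : b = a.val.testBit j.val :=
            hbool _ _ (fun hc => h3 (congrArg some hc))
          exact hj (h1.trans hb2)
      refine ⟨((p, j), !(a.val.testBit j.val)), hlitmem p j hp hfree, ?_⟩
      have hwj : w j = !(a.val.testBit j.val) := hbool2 _ _ hj
      simp [asg, hfree, hw, hwj]
    by_cases hveq : v = fun j : Fin L => a.val.testBit j.val
    · have hv'ne : v' ≠ fun j : Fin L => a.val.testBit j.val := by
        intro h'
        exact hii (hinj i i' v hv (by rw [hv', h', ← hveq]))
      exact key i' v' (Or.inr rfl) hv' hv'ne
    · exact key i v (Or.inl rfl) hv hveq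
  · -- resolution case
    obtain ⟨k1f, hk1lt, hC1get⟩ := exists_get_of_mem_take hC₁
    obtain ⟨k2f, hk2lt, hC2get⟩ := exists_get_of_mem_take hC₂
    set P := freePigs ρ' C with hPdef
    have hPcard : P.card < 2 ^ (L - t') := hnarrow C hCmem
    set ν₀ : Fin m → Option (Fin L → Bool) := fun i => if i ∈ P then ν i else none with hν₀def
    have hν₀agree : ∀ i ∈ P, ν₀ i = ν i := by intro i hi; simp [hν₀def, hi]
    have hν₀dom : nudom ν₀ = P := by
      ext i
      simp only [nudom, Finset.mem_filter, Finset.mem_univ, true_and]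
      constructor
      · intro h
        by_contra hiP
        simp [hν₀def, hiP] at h
      · intro h
        rw [hν₀agree i h]
        exact hdom i h
    have hν₀cons : ∀ i v, ν₀ i = some v → ConsVec ρ' i v := by
      intro i v h
      by_cases hiP : i ∈ P
      · exact hcons i v (by rw [← hν₀agree i hiP]; exact h)
      · simp [hν₀def, hiP] at h
    have hν₀inj : ∀ i i' v, ν₀ i = some v → ν₀ i' = some v → i = i' := by
      intro i i' v h h'
      by_cases hiP : i ∈ P
      · by_cases hiP' : i' ∈ P
        · exact hinj i i' v (by rw [← hν₀agree i hiP]; exact h)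
            (by rw [← hν₀agree i' hiP']; exact h')
        · simp [hν₀def, hiP'] at h'
      · simp [hν₀def, hiP] at h
    have hbuild : ∃ ν' : Fin m → Option (Fin L → Bool),
        (∀ i v, ν' i = some v → ConsVec ρ' i v) ∧
        (∀ i i' v, ν' i = some v → ν' i' = some v → i = i') ∧
        (nudom ν').card ≤ 2 ^ (L - t') ∧ (∀ i ∈ P, ν' i = ν i) ∧
        (ρ' x = none → ν' x.1 ≠ none) := by
      by_cases hx0 : ρ' x = none ∧ ν₀ x.1 = none
      · obtain ⟨v₀, hv₀cons, hv₀fresh⟩ :=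
          exists_freshVec hρ' x.1 ν₀ (by rw [hν₀dom]; exact hPcard)
        refine ⟨Function.update ν₀ x.1 (some v₀), ?_, ?_, ?_, ?_, ?_⟩
        · intro i v h
          by_cases hix : i = x.1
          · subst hix
            rw [Function.update_self] at h
            cases Option.some.inj h
            exact hv₀cons
          · rw [Function.update_of_ne hix] at h
            exact hν₀cons i v h
        · intro i i' v h h'
          by_cases hix : i = x.1 <;> by_cases hix' : i' = x.1
          · rw [hix, hix']
          · subst hix
            rw [Function.update_self] at h
            rw [Function.update_of_ne hix'] at h'
            cases Option.some.inj h
            exact absurd h' (hv₀fresh i')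
          · subst hix'
            rw [Function.update_self] at h'
            rw [Function.update_of_ne hix] at h
            cases Option.some.inj h'
            exact absurd h (hv₀fresh i)
          · rw [Function.update_of_ne hix] at h
            rw [Function.update_of_ne hix'] at h'
            exact hν₀inj i i' v h h'
        · have hd : nudom (Function.update ν₀ x.1 (some v₀)) = insert x.1 (nudom ν₀) := by
            ext i
            simp only [nudom, Finset.mem_filter, Finset.mem_univ, true_and, Finset.mem_insert]
            by_cases hix : i = x.1
            · subst hix; simp [Function.update_self]
            · simp [Function.update_of_ne hix, hix]
          rw [hd, hν₀dom]
          have := Finset.card_insert_le x.1 P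
          omega
        · intro i hi
          have hiν : ν₀ i ≠ none := by rw [hν₀agree i hi]; exact hdom i hi
          have hix : i ≠ x.1 := fun h => hiν (h ▸ hx0.2)
          rw [Function.update_of_ne hix]
          exact hν₀agree i hi
        · intro _
          rw [Function.update_self]
          simp
      · push_neg at hx0
        refine ⟨ν₀, hν₀cons, hν₀inj, ?_, hν₀agree, hx0⟩
        rw [hν₀dom]
        exact le_of_lt hPcard
    obtain ⟨ν', hν'cons, hν'inj, hν'card, hν'agree, hν'x⟩ := hbuild
    have hcov : ∀ (D : Clause (Fin m × Fin L)) (y : Lit (Fin m × Fin L)),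
        (D.erase y ⊆ C) → (y.1 = x) → ∀ p ∈ freePigs ρ' D, ν' p ≠ none := by
      intro D y hDsub hy1 p hp
      obtain ⟨l, hl, rfl⟩ := Finset.mem_image.mp hp
      obtain ⟨hlD, hlnone⟩ := Finset.mem_filter.mp hl
      by_cases hlx : l = y
      · subst hlx
        rw [hy1] at hlnone ⊢
        exact hν'x hlnone
      · have hlC : l ∈ C := hDsub (Finset.mem_erase.mpr ⟨hlx, hlD⟩)
        have hpP : l.1.1 ∈ P := Finset.mem_image.mpr ⟨l, Finset.mem_filter.mpr ⟨hlC, hlnone⟩, rfl⟩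
        rw [hν'agree _ hpP]
        exact hdom _ hpP
    have hsub1 : C₁.erase (x, true) ⊆ C := by
      rw [hCeq]; exact Finset.subset_union_left
    have hsub2 : C₂.erase (x, false) ⊆ C := by
      rw [hCeq]; exact Finset.subset_union_right
    have hg1 : π'.get ⟨k1f.val, k1f.isLt⟩ = C₁ := hC1get
    have hg2 : π'.get ⟨k2f.val, k2f.isLt⟩ = C₂ := hC2get
    have hs₁ := IH k1f.val hk1lt k1f.isLt ν' hν'cons hν'inj hν'card
      (by rw [hg1]; exact hcov C₁ (x, true) hsub1 rfl)
    have hs₂ := IH k2f.val hk2lt k2f.isLt ν' hν'cons hν'inj hν'card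
      (by rw [hg2]; exact hcov C₂ (x, false) hsub2 rfl)
    rw [hg1] at hs₁
    rw [hg2] at hs₂
    obtain ⟨l₁, hl₁, hsat₁⟩ := hs₁
    obtain ⟨l₂, hl₂, hsat₂⟩ := hs₂
    have hne : l₁ ≠ (x, true) ∨ l₂ ≠ (x, false) := by
      by_contra hcontra
      push_neg at hcontra
      obtain ⟨h1, h2⟩ := hcontra
      rw [h1] at hsat₁
      rw [h2] at hsat₂
      have : (some true : Option Bool) = some false := hsat₁.symm.trans hsat₂
      simp at this
    have htrans : ∀ l' ∈ C, asg ρ' ν' l'.1 = some l'.2 → SatBy ρ' ν C := by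
      intro l' hl' hsat
      refine ⟨l', hl', ?_⟩
      cases hρl : ρ' l'.1 with
      | some b =>
        have h1 : asg ρ' ν' l'.1 = some b := by simp [asg, hρl]
        have h2 : asg ρ' ν l'.1 = some b := by simp [asg, hρl]
        rw [h2, ← h1]
        exact hsat
      | none =>
        have hpP : l'.1.1 ∈ P :=
          Finset.mem_image.mpr ⟨l', Finset.mem_filter.mpr ⟨hl', hρl⟩, rfl⟩
        have hagree : ν' l'.1.1 = ν l'.1.1 := hν'agree _ hpP
        have e1 : asg ρ' ν' l'.1 = (ν' l'.1.1).map (fun v => v l'.1.2) := by simp [asg, hρl]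
        have e2 : asg ρ' ν l'.1 = (ν l'.1.1).map (fun v => v l'.1.2) := by simp [asg, hρl]
        rw [e2, ← hagree, ← e1]
        exact hsat
    rcases hne with h | h
    · exact htrans l₁ (hsub1 (Finset.mem_erase.mpr ⟨h, hl₁⟩)) hsat₁
    · exact htrans l₂ (hsub2 (Finset.mem_erase.mpr ⟨h, hl₂⟩)) hsat₂
  · -- weakening case
    obtain ⟨k0f, hk0lt, hC0get⟩ := exists_get_of_mem_take hC₀
    have hsub : C₀ ⊆ C := by rw [hCeq]; exact Finset.subset_insert _ _
    have hg0 : π'.get ⟨k0f.val, k0f.isLt⟩ = C₀ := hC0get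
    have hs := IH k0f.val hk0lt k0f.isLt ν hcons hinj hcard
      (by rw [hg0]; intro i hi; exact hdom i (freePigs_mono hsub (fun _ h => h) hi))
    rw [hg0] at hs
    obtain ⟨l', hl', hsat'⟩ := hs
    exact ⟨l', hsub hl', hsat'⟩

lemma width_lemma {ρ' : Restriction (Fin m × Fin L)} (hmL : t' < L)
    (hρ' : IsTBitRestriction t' m L ρ') (π' : List (Clause (Fin m × Fin L)))
    (hstep : ∀ i : Fin π'.length, ResStep (restrictCnf ρ' (BinPHP m L)) (π'.take i.val) (π'.get i))
    (hnarrow : ∀ C ∈ π', (freePigs ρ' C).card < 2 ^ (L - t')) :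
    (∅ : Clause (Fin m × Fin L)) ∉ π' := by
  intro hmem
  obtain ⟨kf, hkget⟩ := List.mem_iff_get.mp hmem
  have hget : π'.get ⟨kf.val, kf.isLt⟩ = ∅ := hkget
  have hres := width_invariant hmL hρ' π' hstep hnarrow kf.val kf.isLt (fun _ => none)
    (by intro i v h; simp at h) (by intro i i' v h; simp at h)
    (by simp [nudom]) (by rw [hget]; intro i hi; simp [freePigs] at hi)
  rw [hget] at hres
  obtain ⟨l, hl, _⟩ := hres
  exact absurd hl (Finset.notMem_empty l)

end WidthAux

section RestrictDeriv

lemma mem_restrictCnf {ρ : Restriction V} {F : Cnf V} {C C' : Clause V}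
    (h : C ∈ F) (hres : restrictClause ρ C = some C') : C' ∈ restrictCnf ρ F :=
  ⟨C, h, hres⟩

lemma restrict_derivation (F : Cnf V) (σ : Restriction V) (π : List (Clause V))
    (hstep : ∀ i : Fin π.length, ResStep F (π.take i.val) (π.get i)) :
    ∀ k, k ≤ π.length → ∃ π₁ : List (Clause V),
      (∀ i : Fin π₁.length, ResStep (restrictCnf σ F) (π₁.take i.val) (π₁.get i)) ∧
      (∀ D ∈ π₁, ∃ C ∈ π, ∃ C', restrictClause σ C = some C' ∧ D ⊆ C') ∧
      (∀ C ∈ π.take k, ∀ C', restrictClause σ C = some C' → ∃ D ∈ π₁, D ⊆ C') := by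
  intro k
  induction k with
  | zero =>
    intro _
    exact ⟨[], fun i => absurd i.isLt (by simp), by simp, by simp⟩
  | succ k ih =>
    intro hk1
    have hkL : k < π.length := Nat.lt_of_succ_le hk1
    obtain ⟨π₁, h1, h2, h3⟩ := ih (le_of_lt hkL)
    have hstepC := hstep ⟨k, hkL⟩
    set C := π.get ⟨k, hkL⟩ with hCdef
    have hCmem : C ∈ π := by rw [hCdef]; exact List.get_mem π ⟨k, hkL⟩
    have htake : π.take (k+1) = π.take k ++ [C] := by
      rw [List.take_succ]
      congr
      rw [List.getElem?_eq_getElem hkL]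
      rfl
    have hmemsucc : ∀ C'' ∈ π.take (k+1), C'' ∈ π.take k ∨ C'' = C := by
      intro C'' hC''
      rw [htake] at hC''
      rcases List.mem_append.mp hC'' with h | h
      · exact Or.inl h
      · exact Or.inr (List.mem_singleton.mp h)
    cases hres : restrictClause σ C with
    | none =>
      refine ⟨π₁, h1, h2, ?_⟩
      intro C'' hC'' C' hC'
      rcases hmemsucc C'' hC'' with h | rfl
      · exact h3 C'' h C' hC'
      · rw [hres] at hC'
        exact absurd hC' (by simp)
    | some Cr =>
      obtain ⟨hCns, hCr⟩ := restrictClause_eq_some_iff hres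
      rcases hstepC with hax | ⟨C₁, hC₁, C₂, hC₂, x, hx1, hx2, hCeq⟩ | ⟨C₀, hC₀, l, hCeq⟩
      · -- axiom
        refine ⟨π₁ ++ [Cr], deriv_snoc h1 (Or.inl (mem_restrictCnf hax hres)), ?_, ?_⟩
        · intro D hD
          rcases List.mem_append.mp hD with h | h
          · exact h2 D h
          · rw [List.mem_singleton.mp h]
            exact ⟨C, hCmem, Cr, hres, Finset.Subset.refl Cr⟩
        · intro C'' hC'' C' hC'
          rcases hmemsucc C'' hC'' with h | rfl
          · obtain ⟨D, hD, hDs⟩ := h3 C'' h C' hC'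
            exact ⟨D, List.mem_append.mpr (Or.inl hD), hDs⟩
          · rw [hres] at hC'
            refine ⟨Cr, List.mem_append.mpr (Or.inr (List.mem_singleton.mpr rfl)), ?_⟩
            rw [← Option.some.inj hC']
      · -- resolution
        have hal₁ : σ x ≠ some true → ∀ l' ∈ C₁, σ l'.1 ≠ some l'.2 := by
          intro hσx l' hl' hsat
          by_cases hlx : l' = (x, true)
          · rw [hlx] at hsat; exact hσx hsat
          · exact hCns l'
              (by rw [hCeq]; exact Finset.mem_union_left _ (Finset.mem_erase.mpr ⟨hlx, hl'⟩)) hsat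
        have hal₂ : σ x ≠ some false → ∀ l' ∈ C₂, σ l'.1 ≠ some l'.2 := by
          intro hσx l' hl' hsat
          by_cases hlx : l' = (x, false)
          · rw [hlx] at hsat; exact hσx hsat
          · exact hCns l'
              (by rw [hCeq]; exact Finset.mem_union_right _ (Finset.mem_erase.mpr ⟨hlx, hl'⟩)) hsat
        cases hσx : σ x with
        | none =>
          have hres₁ := restrictClause_eq_some_of_not (hal₁ (by rw [hσx]; simp))
          have hres₂ := restrictClause_eq_some_of_not (hal₂ (by rw [hσx]; simp))
          obtain ⟨D₁, hD₁, hD₁s⟩ := h3 C₁ hC₁ _ hres₁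
          obtain ⟨D₂, hD₂, hD₂s⟩ := h3 C₂ hC₂ _ hres₂
          have hCr_eq : Cr = (C₁.filter fun l' => σ l'.1 = none).erase (x, true)
              ∪ (C₂.filter fun l' => σ l'.1 = none).erase (x, false) := by
            rw [hCr, hCeq, Finset.filter_union]
            congr 1 <;>
            · ext y
              simp only [Finset.mem_erase, Finset.mem_filter]
              tauto
          by_cases hxD₁ : (x, true) ∈ D₁
          · by_cases hxD₂ : (x, false) ∈ D₂
            · refine ⟨π₁ ++ [D₁.erase (x, true) ∪ D₂.erase (x, false)],
                deriv_snoc h1 (Or.inr (Or.inl ⟨D₁, hD₁, D₂, hD₂, x, hxD₁, hxD₂, rfl⟩)), ?_, ?_⟩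
              · intro D hD
                rcases List.mem_append.mp hD with h | h
                · exact h2 D h
                · rw [List.mem_singleton.mp h]
                  refine ⟨C, hCmem, Cr, hres, ?_⟩
                  rw [hCr_eq]
                  exact Finset.union_subset_union (Finset.erase_subset_erase _ hD₁s)
                    (Finset.erase_subset_erase _ hD₂s)
              · intro C'' hC'' C' hC'
                rcases hmemsucc C'' hC'' with h | rfl
                · obtain ⟨D, hD, hDs⟩ := h3 C'' h C' hC'
                  exact ⟨D, List.mem_append.mpr (Or.inl hD), hDs⟩
                · rw [hres] at hC'
                  refine ⟨D₁.erase (x, true) ∪ D₂.erase (x, false),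
                    List.mem_append.mpr (Or.inr (List.mem_singleton.mpr rfl)), ?_⟩
                  rw [← Option.some.inj hC', hCr_eq]
                  exact Finset.union_subset_union (Finset.erase_subset_erase _ hD₁s)
                    (Finset.erase_subset_erase _ hD₂s)
            · -- (x, false) ∉ D₂ : reuse D₂
              refine ⟨π₁, h1, h2, ?_⟩
              intro C'' hC'' C' hC'
              rcases hmemsucc C'' hC'' with h | rfl
              · exact h3 C'' h C' hC'
              · rw [hres] at hC'
                refine ⟨D₂, hD₂, ?_⟩
                rw [← Option.some.inj hC', hCr_eq]
                intro y hy
                apply Finset.mem_union_right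
                exact Finset.mem_erase.mpr ⟨fun hc => hxD₂ (hc ▸ hy), hD₂s hy⟩
          · -- (x, true) ∉ D₁ : reuse D₁
            refine ⟨π₁, h1, h2, ?_⟩
            intro C'' hC'' C' hC'
            rcases hmemsucc C'' hC'' with h | rfl
            · exact h3 C'' h C' hC'
            · rw [hres] at hC'
              refine ⟨D₁, hD₁, ?_⟩
              rw [← Option.some.inj hC', hCr_eq]
              intro y hy
              apply Finset.mem_union_left
              exact Finset.mem_erase.mpr ⟨fun hc => hxD₁ (hc ▸ hy), hD₁s hy⟩
        | some b =>
          have hsubCr : ∀ (D₀ : Clause V) (y : Lit V), y.1 = x →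
              (D₀.erase y ⊆ C) → (D₀.filter fun l' => σ l'.1 = none) ⊆ Cr := by
            intro D₀ y hy1 hDsub z hz
            obtain ⟨hz1, hz2⟩ := Finset.mem_filter.mp hz
            have hzy : z ≠ y := by
              intro hc
              rw [hc, hy1, hσx] at hz2
              exact absurd hz2 (by simp)
            rw [hCr]
            exact Finset.mem_filter.mpr ⟨hDsub (Finset.mem_erase.mpr ⟨hzy, hz1⟩), hz2⟩
          cases b with
          | true =>
            have hres₂ := restrictClause_eq_some_of_not (hal₂ (by rw [hσx]; simp))
            obtain ⟨D₂, hD₂, hD₂s⟩ := h3 C₂ hC₂ _ hres₂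
            refine ⟨π₁, h1, h2, ?_⟩
            intro C'' hC'' C' hC'
            rcases hmemsucc C'' hC'' with h | rfl
            · exact h3 C'' h C' hC'
            · rw [hres] at hC'
              refine ⟨D₂, hD₂, ?_⟩
              rw [← Option.some.inj hC']
              exact hD₂s.trans (hsubCr C₂ (x, false) rfl
                (by rw [hCeq]; exact Finset.subset_union_right))
          | false =>
            have hres₁ := restrictClause_eq_some_of_not (hal₁ (by rw [hσx]; simp))
            obtain ⟨D₁, hD₁, hD₁s⟩ := h3 C₁ hC₁ _ hres₁
            refine ⟨π₁, h1, h2, ?_⟩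
            intro C'' hC'' C' hC'
            rcases hmemsucc C'' hC'' with h | rfl
            · exact h3 C'' h C' hC'
            · rw [hres] at hC'
              refine ⟨D₁, hD₁, ?_⟩
              rw [← Option.some.inj hC']
              exact hD₁s.trans (hsubCr C₁ (x, true) rfl
                (by rw [hCeq]; exact Finset.subset_union_left))
      · -- weakening
        have hC₀ns : ∀ l' ∈ C₀, σ l'.1 ≠ some l'.2 := by
          intro l' hl'
          exact hCns l' (by rw [hCeq]; exact Finset.mem_insert_of_mem hl')
        have hres₀ := restrictClause_eq_some_of_not hC₀ns
        obtain ⟨D, hD, hDs⟩ := h3 C₀ hC₀ _ hres₀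
        refine ⟨π₁, h1, h2, ?_⟩
        intro C'' hC'' C' hC'
        rcases hmemsucc C'' hC'' with h | rfl
        · exact h3 C'' h C' hC'
        · rw [hres] at hC'
          refine ⟨D, hD, ?_⟩
          rw [← Option.some.inj hC', hCr]
          refine hDs.trans ?_
          intro y hy
          obtain ⟨hy1, hy2⟩ := Finset.mem_filter.mp hy
          exact Finset.mem_filter.mpr ⟨by rw [hCeq]; exact Finset.mem_insert_of_mem hy1, hy2⟩

end RestrictDeriv

section Counting

variable {m L t : ℕ}

lemma exists_killing_restriction (ht1 : t < L) {ρ : Restriction (Fin m × Fin L)}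
    (hρ : IsTBitRestriction t m L ρ) (π : List (Clause (Fin m × Fin L)))
    (hWm : 2 ^ (L - t - 1) ≤ m)
    (hlen : (π.length : ℝ) <
      Real.exp ((2 ^ (L - t - 1) : ℝ) / (2 * ((L : ℝ) - (t : ℝ))))) :
    ∃ σ' : Restriction (Fin m × Fin L),
      (∀ v, σ' v ≠ none → ρ v = none) ∧
      IsTBitRestriction (t + 1) m L (combineR ρ σ') ∧
      ∀ C ∈ π, 2 ^ (L - t - 1) ≤ (freePigs ρ C).card →
        restrictClause σ' C = none := by
  classical
  set r := L - t with hrdef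
  have hr1 : 1 ≤ r := by omega
  set W := 2 ^ (r - 1) with hWdef
  set fS : Fin m → Finset (Fin L) := (fun i => Finset.univ.filter fun j => ρ (i, j) = none)
    with hfSdef
  have hfS_card : ∀ i, (fS i).card = r := by
    intro i
    have h1 := hρ i
    have h2 := Finset.card_filter_add_card_filter_not
      (s := (Finset.univ : Finset (Fin L))) (p := fun j => ρ (i, j) ≠ none)
    have h3 : (Finset.univ.filter fun j : Fin L => ¬ ρ (i, j) ≠ none) = fS i := by
      rw [hfSdef]; ext j; simp
    rw [h3, h1, Finset.card_univ, Fintype.card_fin] at h2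
    omega
  set e : (i : Fin m) → Fin r ≃o {x : Fin L // x ∈ fS i} :=
    (fun i => (fS i).orderIsoOfFin (hfS_card i)) with hedef
  set σo : (Fin m → Fin r × Bool) → Restriction (Fin m × Fin L) := (fun g p =>
    if (e p.1 (g p.1).1).val = p.2 then some (g p.1).2 else none) with hσodef
  have hσo_val : ∀ g (p : Fin m × Fin L), (e p.1 (g p.1).1).val = p.2 →
      σo g p = some (g p.1).2 := by
    intro g p h
    rw [hσodef]
    exact if_pos h
  have hσo_nval : ∀ g (p : Fin m × Fin L), (e p.1 (g p.1).1).val ≠ p.2 →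
      σo g p = none := by
    intro g p h
    rw [hσodef]
    exact if_neg h
  have hσo_support : ∀ g (p : Fin m × Fin L), σo g p ≠ none → ρ p = none := by
    intro g p h
    by_cases hc : (e p.1 (g p.1).1).val = p.2
    · have hm2 : (e p.1 (g p.1).1).val ∈ fS p.1 := (e p.1 (g p.1).1).2
      rw [hc] at hm2
      have h3 : ρ (p.1, p.2) = none := (Finset.mem_filter.mp hm2).2
      rw [← Prod.mk.eta (p := p)]
      exact h3
    · exact absurd (hσo_nval g p hc) h
  have hcomb : ∀ g, IsTBitRestriction (t + 1) m L (combineR ρ (σo g)) := by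
    intro g i
    have hcne : ∀ v, (combineR ρ (σo g) v ≠ none) ↔ (ρ v ≠ none ∨ σo g v ≠ none) := by
      intro v
      rw [Ne, combineR_eq_none_iff]
      tauto
    have hσne : ∀ j : Fin L, (σo g (i, j) ≠ none) ↔ (e i (g i).1).val = j := by
      intro j
      constructor
      · intro h
        by_contra hc
        exact h (hσo_nval g (i, j) hc)
      · intro h
        rw [hσo_val g (i, j) h]
        simp
    have hsplit : (Finset.univ.filter fun j : Fin L => combineR ρ (σo g) (i, j) ≠ none)
        = (Finset.univ.filter fun j : Fin L => ρ (i, j) ≠ none) ∪ {(e i (g i).1).val} := by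
      ext j
      simp only [Finset.mem_filter, Finset.mem_univ, true_and, Finset.mem_union,
        Finset.mem_singleton, hcne, hσne]
      constructor
      · rintro (h | h)
        · exact Or.inl h
        · exact Or.inr h.symm
      · rintro (h | h)
        · exact Or.inl h
        · exact Or.inr h.symm
    have hdisj : Disjoint (Finset.univ.filter fun j : Fin L => ρ (i, j) ≠ none)
        ({(e i (g i).1).val} : Finset (Fin L)) := by
      rw [Finset.disjoint_singleton_right]
      intro hc
      have := (Finset.mem_filter.mp hc).2
      apply this
      have hm2 : (e i (g i).1).val ∈ fS i := (e i (g i).1).2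
      exact (Finset.mem_filter.mp hm2).2
    rw [hsplit, Finset.card_union_of_disjoint hdisj, hρ i, Finset.card_singleton]
  have hgood : ∃ g : Fin m → Fin r × Bool, ∀ C ∈ π, W ≤ (freePigs ρ C).card →
      ∃ l ∈ C, σo g l.1 = some l.2 := by
    by_contra hcon
    push_neg at hcon
    have hch : ∀ C : Clause (Fin m × Fin L), W ≤ (freePigs ρ C).card →
        ∃ (P : Finset (Fin m)) (c : Fin m → Fin r × Bool), P.card = W ∧
          ∀ g : Fin m → Fin r × Bool, (∃ i ∈ P, g i = c i) →
            ∃ l ∈ C, σo g l.1 = some l.2 := by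
      intro C hCW
      obtain ⟨P, hPsub, hPcard⟩ := Finset.exists_subset_card_eq hCW
      have hpick : ∀ i ∈ P, ∃ p : Fin r × Bool, ∀ g : Fin m → Fin r × Bool, g i = p →
          ∃ l ∈ C, σo g l.1 = some l.2 := by
        intro i hi
        have hi' := hPsub hi
        obtain ⟨l, hl, rfl⟩ := Finset.mem_image.mp hi'
        obtain ⟨hlC, hlnone⟩ := Finset.mem_filter.mp hl
        have hjmem : l.1.2 ∈ fS l.1.1 := by
          refine Finset.mem_filter.mpr ⟨Finset.mem_univ _, ?_⟩
          rw [Prod.mk.eta]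
          exact hlnone
        refine ⟨((e l.1.1).symm ⟨l.1.2, hjmem⟩, l.2), ?_⟩
        intro g hg
        refine ⟨l, hlC, ?_⟩
        have h1 : (e l.1.1 (g l.1.1).1).val = l.1.2 := by
          rw [hg]
          simp
        rw [hσo_val g l.1 h1, hg]
      choose c hc using hpick
      refine ⟨P, fun i => if h : i ∈ P then c i h else (⟨0, hr1⟩, false), hPcard, ?_⟩
      rintro g ⟨i, hiP, hgi⟩
      dsimp only at hgi
      rw [dif_pos hiP] at hgi
      exact hc i hiP g hgi
    have hch' : ∀ C : Clause (Fin m × Fin L), ∃ (P : Finset (Fin m))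
        (c : Fin m → Fin r × Bool), W ≤ (freePigs ρ C).card →
          (P.card = W ∧ ∀ g : Fin m → Fin r × Bool, (∃ i ∈ P, g i = c i) →
            ∃ l ∈ C, σo g l.1 = some l.2) := by
      intro C
      by_cases hCW : W ≤ (freePigs ρ C).card
      · obtain ⟨P, c, h1, h2⟩ := hch C hCW
        exact ⟨P, c, fun _ => ⟨h1, h2⟩⟩
      · exact ⟨∅, fun _ => (⟨0, hr1⟩, false), fun h => absurd h hCW⟩
    choose PFn cFn hPC using hch'
    have hPcard : ∀ C, W ≤ (freePigs ρ C).card → (PFn C).card = W := fun C h => (hPC C h).1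
    have hsat : ∀ C, W ≤ (freePigs ρ C).card → ∀ g : Fin m → Fin r × Bool,
        (∃ i ∈ PFn C, g i = cFn C i) → ∃ l ∈ C, σo g l.1 = some l.2 :=
      fun C h => (hPC C h).2
    set Bad : Clause (Fin m × Fin L) → Finset (Fin m → Fin r × Bool) := (fun C =>
      Fintype.piFinset fun i => if i ∈ PFn C then {cFn C i}ᶜ else Finset.univ) with hBad
    set WS := π.toFinset.filter (fun C => W ≤ (freePigs ρ C).card) with hWS
    have hcover : (Finset.univ : Finset (Fin m → Fin r × Bool)) ⊆ WS.biUnion Bad := by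
      intro g _
      obtain ⟨C, hCπ, hCW, hfail⟩ := hcon g
      refine Finset.mem_biUnion.mpr ⟨C,
        Finset.mem_filter.mpr ⟨List.mem_toFinset.mpr hCπ, hCW⟩, ?_⟩
      rw [hBad]
      refine Fintype.mem_piFinset.mpr ?_
      intro i
      by_cases hiP : i ∈ PFn C
      · rw [if_pos hiP]
        refine Finset.mem_compl.mpr ?_
        rw [Finset.mem_singleton]
        intro hgi
        obtain ⟨l, hl, hsatl⟩ := hsat C hCW g ⟨i, hiP, hgi⟩
        exact hfail l hl hsatl
      · rw [if_neg hiP]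
        exact Finset.mem_univ _
    have hX : Fintype.card (Fin r × Bool) = 2 * r := by
      rw [Fintype.card_prod, Fintype.card_fin, Fintype.card_bool]
      ring
    have hBadcard : ∀ C ∈ WS, (Bad C).card = (2 * r) ^ (m - W) * (2 * r - 1) ^ W := by
      intro C hC
      have hCW := (Finset.mem_filter.mp hC).2
      rw [hBad]
      rw [Fintype.card_piFinset]
      have hcongr : ∀ i : Fin m,
          ((if i ∈ PFn C then ({cFn C i}ᶜ : Finset (Fin r × Bool)) else Finset.univ)).card
          = if i ∈ PFn C then 2 * r - 1 else 2 * r := by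
        intro i
        by_cases hiP : i ∈ PFn C
        · rw [if_pos hiP, if_pos hiP, Finset.card_compl, Finset.card_singleton, hX]
        · rw [if_neg hiP, if_neg hiP, Finset.card_univ, hX]
      rw [Finset.prod_congr rfl (fun i _ => hcongr i)]
      rw [← Finset.prod_sdiff (Finset.subset_univ (PFn C))]
      have hp1 : ∏ i ∈ Finset.univ \ PFn C, (if i ∈ PFn C then 2 * r - 1 else 2 * r)
          = (2 * r) ^ (m - W) := by
        rw [Finset.prod_congr rfl (fun i hi => if_neg (Finset.mem_sdiff.mp hi).2),
          Finset.prod_const, Finset.card_sdiff_of_subset (Finset.subset_univ _), Finset.card_univ,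
          Fintype.card_fin, hPcard C hCW]
      have hp2 : ∏ i ∈ PFn C, (if i ∈ PFn C then 2 * r - 1 else 2 * r) = (2 * r - 1) ^ W := by
        rw [Finset.prod_congr rfl (fun i hi => if_pos hi), Finset.prod_const, hPcard C hCW]
      rw [hp1, hp2]
    have hle : (2 * r) ^ m ≤ WS.card * ((2 * r) ^ (m - W) * (2 * r - 1) ^ W) := by
      calc (2 * r) ^ m = (Finset.univ : Finset (Fin m → Fin r × Bool)).card := by
            rw [Finset.card_univ, Fintype.card_fun, hX, Fintype.card_fin]
        _ ≤ (WS.biUnion Bad).card := Finset.card_le_card hcover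
        _ ≤ ∑ C ∈ WS, (Bad C).card := Finset.card_biUnion_le
        _ = WS.card * ((2 * r) ^ (m - W) * (2 * r - 1) ^ W) := by
            rw [Finset.sum_congr rfl hBadcard, Finset.sum_const, smul_eq_mul]
    -- pass to the reals
    set Xr : ℝ := 2 * (r : ℝ) with hXr
    have hrR : (1 : ℝ) ≤ (r : ℝ) := by exact_mod_cast hr1
    have hXr2 : (2 : ℝ) ≤ Xr := by rw [hXr]; linarith
    have hXrpos : (0 : ℝ) < Xr := by linarith
    have hcastX : ((2 * r : ℕ) : ℝ) = Xr := by rw [hXr]; push_cast; ring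
    have hcastXm1 : ((2 * r - 1 : ℕ) : ℝ) = Xr - 1 := by
      rw [Nat.cast_sub (by omega : 1 ≤ 2 * r), hcastX, Nat.cast_one]
    have hreal : Xr ^ m ≤ (WS.card : ℝ) * (Xr ^ (m - W) * (Xr - 1) ^ W) := by
      have h := (Nat.cast_le (α := ℝ)).mpr hle
      rw [Nat.cast_mul, Nat.cast_mul, Nat.cast_pow, Nat.cast_pow, Nat.cast_pow,
        hcastX, hcastXm1] at h
      exact h
    have hlenWS : (WS.card : ℝ) ≤ (π.length : ℝ) := by
      have h1 : WS.card ≤ π.toFinset.card := by rw [hWS]; exact Finset.card_filter_le _ _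
      have h2 := π.toFinset_card_le
      exact_mod_cast le_trans h1 h2
    have hE : (2 ^ (L - t - 1) : ℝ) / (2 * ((L : ℝ) - (t : ℝ))) = (W : ℝ) / Xr := by
      have h1 : L - t - 1 = r - 1 := by rw [hrdef]
      have hrcast : ((L : ℝ) - (t : ℝ)) = (r : ℝ) := by
        rw [hrdef, Nat.cast_sub (le_of_lt ht1)]
      rw [h1, hrcast, hWdef, hXr]
      push_cast
      ring
    have hexp1 : Xr - 1 ≤ Xr * Real.exp (-(1 / Xr)) := by
      have h1 := Real.add_one_le_exp (-(1 / Xr))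
      have h2 : Xr * (-(1 / Xr) + 1) ≤ Xr * Real.exp (-(1 / Xr)) :=
        mul_le_mul_of_nonneg_left h1 (le_of_lt hXrpos)
      have h3 : Xr * (-(1 / Xr) + 1) = Xr - 1 := by
        have h0 : Xr ≠ 0 := ne_of_gt hXrpos
        field_simp
        ring
      linarith
    have hpow : (Xr - 1) ^ W ≤ Xr ^ W * Real.exp (-((W : ℝ) / Xr)) := by
      calc (Xr - 1) ^ W ≤ (Xr * Real.exp (-(1 / Xr))) ^ W :=
            pow_le_pow_left₀ (by linarith) hexp1 W
        _ = Xr ^ W * (Real.exp (-(1 / Xr))) ^ W := mul_pow _ _ _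
        _ = Xr ^ W * Real.exp (-((W : ℝ) / Xr)) := by
            rw [← Real.exp_nat_mul]
            congr 1
            rw [mul_neg, mul_one_div]
    have hstrict : (WS.card : ℝ) * (Xr ^ (m - W) * (Xr - 1) ^ W) < Xr ^ m := by
      have hposfac : (0 : ℝ) < Xr ^ (m - W) * (Xr - 1) ^ W := by
        apply mul_pos (pow_pos hXrpos _) (pow_pos (by linarith) _)
      have hlt : (WS.card : ℝ) < Real.exp ((W : ℝ) / Xr) := by
        calc (WS.card : ℝ) ≤ (π.length : ℝ) := hlenWS
          _ < Real.exp ((2 ^ (L - t - 1) : ℝ) / (2 * ((L : ℝ) - (t : ℝ)))) := hlen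
          _ = Real.exp ((W : ℝ) / Xr) := by rw [hE]
      calc (WS.card : ℝ) * (Xr ^ (m - W) * (Xr - 1) ^ W)
          < Real.exp ((W : ℝ) / Xr) * (Xr ^ (m - W) * (Xr - 1) ^ W) :=
            mul_lt_mul_of_pos_right hlt hposfac
        _ ≤ Real.exp ((W : ℝ) / Xr) * (Xr ^ (m - W) * (Xr ^ W * Real.exp (-((W : ℝ) / Xr)))) := by
            apply mul_le_mul_of_nonneg_left _ (le_of_lt (Real.exp_pos _))
            apply mul_le_mul_of_nonneg_left hpow (le_of_lt (pow_pos hXrpos _))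
        _ = (Real.exp ((W : ℝ) / Xr) * Real.exp (-((W : ℝ) / Xr))) * (Xr ^ (m - W) * Xr ^ W) := by
            ring
        _ = Xr ^ (m - W) * Xr ^ W := by
            rw [← Real.exp_add, add_neg_cancel, Real.exp_zero, one_mul]
        _ = Xr ^ m := by
            rw [← pow_add]
            congr 1
            have hWm' : W ≤ m := hWm
            omega
    exact absurd hreal (not_le.mpr hstrict)
  obtain ⟨g, hg⟩ := hgood
  refine ⟨σo g, hσo_support g, hcomb g, ?_⟩
  intro C hC hCW
  obtain ⟨l, hl, hsatl⟩ := hg C hC hCW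
  exact restrictClause_eq_none hl hsatl

end Counting

end LowerBoundAux

/-- **Resolution lower bound for the binary pigeonhole principle.**  For every `t`-bit
restriction `ρ` (`0 ≤ t < log n`), every Resolution refutation of `BinPHP^m_n↾ρ` has
size at least `e^(n/(2^(t+1)·2(log n - t)))`; in particular every Resolution refutation
of `BinPHP^m_n` has size at least `e^(n/(4 log n))`. -/
theorem binphp_res_lower_bound (L n m : ℕ) (hn : n = 2 ^ L) (hm : n < m) :
    (∀ t : ℕ, t < L →
      ∀ ρ : Restriction (Fin m × Fin L), IsTBitRestriction t m L ρ →
        ∀ π : List (Clause (Fin m × Fin L)),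
          IsResRefutation (restrictCnf ρ (BinPHP m L)) π →
          Real.exp ((n : ℝ) / (2 ^ (t + 1) * (2 * ((L : ℝ) - (t : ℝ))))) ≤ (π.length : ℝ)) ∧
    (∀ π : List (Clause (Fin m × Fin L)), IsResRefutation (BinPHP m L) π →
      Real.exp ((n : ℝ) / (4 * (L : ℝ))) ≤ (π.length : ℝ)) := by
  classical
  have main : ∀ t : ℕ, t < L →
      ∀ ρ : Restriction (Fin m × Fin L), IsTBitRestriction t m L ρ →
        ∀ π : List (Clause (Fin m × Fin L)),
          IsResRefutation (restrictCnf ρ (BinPHP m L)) π →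
          Real.exp ((n : ℝ) / (2 ^ (t + 1) * (2 * ((L : ℝ) - (t : ℝ))))) ≤ (π.length : ℝ) := by
    intro t ht ρ hρ π hπ
    obtain ⟨hsteps, hlast⟩ := hπ
    by_contra hcon
    push_neg at hcon
    have hne : π ≠ [] := by
      intro h
      rw [h] at hlast
      simp at hlast
    have hlen0 : 0 < π.length := List.length_pos_iff.mpr hne
    have hfirst_ne : π.get ⟨0, hlen0⟩ ≠ ∅ := by
      rcases hsteps ⟨0, hlen0⟩ with h | h | h
      · obtain ⟨C₀, hC₀, hres⟩ := h
        obtain ⟨i, i', hii, a, rfl⟩ := hC₀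
        obtain ⟨hns, hCk⟩ := restrictClause_eq_some_iff hres
        obtain ⟨j, hj⟩ := exists_free_bit hρ ht i
        intro hemp
        have hmem : ((i, j), !(a.val.testBit j.val)) ∈ π.get ⟨0, hlen0⟩ := by
          rw [hCk]
          exact Finset.mem_filter.mpr
            ⟨Finset.mem_union_left _ (Finset.mem_image.mpr ⟨j, Finset.mem_univ _, rfl⟩), hj⟩
        rw [hemp] at hmem
        exact absurd hmem (Finset.notMem_empty _)
      · obtain ⟨C₁, hC₁, _⟩ := h
        simp at hC₁
      · obtain ⟨C', hC', _⟩ := h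
        simp at hC'
    have hlen2 : 2 ≤ π.length := by
      by_contra h2
      have h1 : π.length = 1 := by omega
      obtain ⟨a, ha⟩ := List.length_eq_one_iff.mp h1
      subst ha
      simp at hlast
      apply hfirst_ne
      simp [hlast]
    have hEmem : (∅ : Clause (Fin m × Fin L)) ∈ π := by
      rw [List.getLast?_eq_getLast hne] at hlast
      have := Option.some.inj hlast
      rw [← this]
      exact List.getLast_mem hne
    by_cases hc : t + 1 < L
    · -- main case
      have hEe : (n : ℝ) / (2 ^ (t + 1) * (2 * ((L : ℝ) - (t : ℝ)))) =
          (2 ^ (L - t - 1) : ℝ) / (2 * ((L : ℝ) - (t : ℝ))) := by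
        have h2 : (n : ℝ) = 2 ^ (t + 1) * 2 ^ (L - t - 1) := by
          rw [hn]
          push_cast
          rw [← pow_add]
          congr 1
          omega
        rw [h2, mul_div_mul_left _ _ (by positivity : ((2 : ℝ) ^ (t + 1)) ≠ 0)]
      rw [hEe] at hcon
      have hWm : 2 ^ (L - t - 1) ≤ m := by
        have h1 : 2 ^ (L - t - 1) ≤ 2 ^ L := Nat.pow_le_pow_right (by norm_num) (by omega)
        have h2 : 2 ^ L < m := hn ▸ hm
        exact le_of_lt (lt_of_le_of_lt h1 h2)
      obtain ⟨σ', hσsup, hσtbit, hσkill⟩ := exists_killing_restriction ht hρ π hWm hcon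
      obtain ⟨π₁, hp1, hp2, hp3⟩ :=
        restrict_derivation (restrictCnf ρ (BinPHP m L)) σ' π hsteps π.length (le_refl _)
      obtain ⟨D, hD, hDsub⟩ := hp3 ∅ (by rw [List.take_length]; exact hEmem) ∅
        (restrictClause_empty σ')
      have hDe : D = ∅ := Finset.subset_empty.mp hDsub
      have hnarrow : ∀ D' ∈ π₁, (freePigs (combineR ρ σ') D').card < 2 ^ (L - (t + 1)) := by
        intro D' hD'
        obtain ⟨Cs, hCs, C', hres', hsub'⟩ := hp2 D' hD'
        have halive : ¬ (2 ^ (L - t - 1) ≤ (freePigs ρ Cs).card) := by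
          intro hwide
          rw [hσkill Cs hCs hwide] at hres'
          exact absurd hres' (by simp)
        have hmono : freePigs (combineR ρ σ') D' ⊆ freePigs ρ Cs := by
          apply freePigs_mono
          · obtain ⟨_, hCeq'⟩ := restrictClause_eq_some_iff hres'
            exact hsub'.trans (by rw [hCeq']; exact Finset.filter_subset _ _)
          · intro v hv
            exact (combineR_eq_none_iff.mp hv).1
        exact lt_of_le_of_lt (Finset.card_le_card hmono) (not_le.mp halive)
      have hsteps₁ : ∀ i : Fin π₁.length,
          ResStep (restrictCnf (combineR ρ σ') (BinPHP m L)) (π₁.take i.val) (π₁.get i) :=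
        fun i => ResStep.mono_cnf (restrictCnf_comp_subset ρ σ' _) (hp1 i)
      have hnot := width_lemma hc hσtbit π₁ hsteps₁ hnarrow
      rw [hDe] at hD
      exact hnot hD
    · -- t + 1 = L : trivial case
      have hteq : t + 1 = L := by omega
      have hEhalf : (n : ℝ) / (2 ^ (t + 1) * (2 * ((L : ℝ) - (t : ℝ)))) = 1 / 2 := by
        have hLt : (L : ℝ) - (t : ℝ) = 1 := by
          rw [← hteq]
          push_cast
          ring
        rw [hLt, hn, hteq]
        push_cast
        have h2L : ((2 : ℝ) ^ (t + 1)) ≠ 0 := by positivity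
        field_simp
      rw [hEhalf] at hcon
      have hexpmul : Real.exp (1 / 2 : ℝ) * Real.exp (1 / 2 : ℝ) = Real.exp 1 := by
        rw [← Real.exp_add]
        norm_num
      have hexp2 : Real.exp (1 / 2 : ℝ) ≤ 2 := by
        nlinarith [Real.exp_one_lt_d9, Real.exp_pos (1 / 2 : ℝ)]
      have h2len : (2 : ℝ) ≤ (π.length : ℝ) := by exact_mod_cast hlen2
      linarith
  constructor
  · exact main
  · intro π hπ
    by_cases hL : 0 < L
    · have hρ0 : IsTBitRestriction 0 m L (fun _ => none) := by
        intro i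
        simp
      have hFeq : restrictCnf (fun _ => none) (BinPHP m L) = BinPHP m L := by
        ext C
        constructor
        · rintro ⟨C₀, hC₀, hres⟩
          obtain ⟨hns, hCk⟩ := restrictClause_eq_some_iff hres
          have hCeq : C = C₀ := by
            rw [hCk]
            exact Finset.filter_true_of_mem (fun _ _ => rfl)
          rw [hCeq]
          exact hC₀
        · intro hC
          refine ⟨C, hC, ?_⟩
          rw [restrictClause_eq_some_of_not (by intro l _; simp)]
          congr 1
          exact Finset.filter_true_of_mem (fun _ _ => rfl)
      have h := main 0 hL (fun _ => none) hρ0 π (by rw [hFeq]; exact hπ)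
      refine le_trans (le_of_eq ?_) h
      congr 1
      push_cast
      ring
    · have hL0 : L = 0 := by omega
      have hne : π ≠ [] := by
        intro h
        obtain ⟨_, hlast⟩ := hπ
        rw [h] at hlast
        simp at hlast
      have hlen1 : 1 ≤ π.length := List.length_pos_iff.mpr hne
      have hLr : (L : ℝ) = 0 := by rw [hL0]; simp
      rw [hLr]
      norm_num
      exact_mod_cast hlen1
end PC
end

section
/- There exists N such that for every power of 2 n ≥ N and every m > n, every Sherali–Adams refutation of BinPHP^m_n contains at least e^{n/(32·(log n)²)} terms. -/
open scoped Classical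

namespace PC

namespace BPHPaux
open Finset
variable {m L : ℕ}
def pig (D : Conj (Fin m × Fin L)) : Finset (Fin m) := D.image (fun l => l.1.1)
def z0 (L : ℕ) : Fin (2 ^ L) := ⟨0, Nat.two_pow_pos L⟩
def sat (φ : Fin m → Fin (2 ^ L)) (D : Conj (Fin m × Fin L)) : Prop :=
  ∀ l ∈ D, ((φ l.1.1 : ℕ).testBit (l.1.2 : ℕ)) = l.2
variable (S : Fin L × Bool → Finset (Fin (2 ^ L))) (ρ : Fin m → Fin L × Bool)
noncomputable def Dm (P : Finset (Fin m)) : Finset (Fin m → Fin (2 ^ L)) :=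
  Finset.univ.filter (fun φ =>
    (∀ i ∈ P, φ i ∈ S (ρ i)) ∧ Set.InjOn φ ↑P ∧ ∀ i ∉ P, φ i = z0 L)
noncomputable def NumOn (P : Finset (Fin m)) (D : Conj (Fin m × Fin L)) : ℕ :=
  ((Dm S ρ P).filter (fun φ => sat φ D)).card

lemma mem_Dm {P : Finset (Fin m)} {φ : Fin m → Fin (2 ^ L)} :
    φ ∈ Dm S ρ P ↔
      (∀ i ∈ P, φ i ∈ S (ρ i)) ∧ Set.InjOn φ ↑P ∧ ∀ i ∉ P, φ i = z0 L := by
  unfold Dm; simp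

/-- The key extension counting lemma. -/
lemma numOn_ext (hdisj : ∀ τ τ', τ ≠ τ' → Disjoint (S τ) (S τ'))
    (P : Finset (Fin m)) (i : Fin m) (hi : i ∉ P) (D : Conj (Fin m × Fin L))
    (hD : pig D ⊆ P) :
    NumOn S ρ (insert i P) D
      = NumOn S ρ P D * ((S (ρ i)).card - (P.filter (fun k => ρ k = ρ i)).card) := by
  classical
  set A := (Dm S ρ (insert i P)).filter (fun φ => sat φ D) with hA
  set B := (Dm S ρ P).filter (fun φ => sat φ D) with hB
  have hpigI : ∀ l ∈ D, l.1.1 ≠ i := by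
    intro l hl hEq
    exact hi (hD (Finset.mem_image.mpr ⟨l, hl, hEq⟩))
  have hne : ∀ {k : Fin m}, k ∈ P → k ≠ i := fun hk h => hi (h ▸ hk)
  -- the projection map
  have hmaps : ∀ φ ∈ A, Function.update φ i (z0 L) ∈ B := by
    intro φ hφ
    rw [hA, Finset.mem_filter] at hφ
    obtain ⟨hdm, hsat⟩ := hφ
    rw [mem_Dm] at hdm
    obtain ⟨hval, hinj, hz⟩ := hdm
    rw [hB, Finset.mem_filter, mem_Dm]
    refine ⟨⟨?_, ?_, ?_⟩, ?_⟩
    · intro k hk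
      rw [Function.update_of_ne (hne hk)]
      exact hval k (mem_insert_of_mem hk)
    · intro x hx y hy hxy
      simp only [Finset.coe_insert] at *
      rw [Function.update_of_ne (hne hx), Function.update_of_ne (hne hy)] at hxy
      exact hinj (Set.mem_insert_of_mem _ hx) (Set.mem_insert_of_mem _ hy) hxy
    · intro k hk
      by_cases hki : k = i
      · subst hki; simp
      · rw [Function.update_of_ne hki]
        exact hz k (fun hmem => by
          rcases Finset.mem_insert.mp hmem with h | h
          · exact hki h
          · exact hk h)
    · intro l hl
      rw [Function.update_of_ne (hpigI l hl)]
      exact hsat l hl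
  rw [show NumOn S ρ (insert i P) D = A.card from rfl,
      show NumOn S ρ P D = B.card from rfl]
  rw [Finset.card_eq_sum_card_fiberwise hmaps]
  have hfiber : ∀ ψ ∈ B, (A.filter (fun φ => Function.update φ i (z0 L) = ψ)).card
      = ((S (ρ i)).card - (P.filter (fun k => ρ k = ρ i)).card) := by
    intro ψ hψ
    rw [hB, Finset.mem_filter, mem_Dm] at hψ
    obtain ⟨⟨hval, hinj, hz⟩, hsat⟩ := hψ
    have hψi : ψ i = z0 L := hz i hi
    have hcard : (A.filter (fun φ => Function.update φ i (z0 L) = ψ)).card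
        = ((S (ρ i)) \ P.image ψ).card := by
      apply Finset.card_bij' (fun φ _ => φ i)
        (fun v _ => Function.update ψ i v)
      · -- forward maps into target
        intro φ hφ
        rw [Finset.mem_filter] at hφ
        obtain ⟨hφA, hπ⟩ := hφ
        rw [hA, Finset.mem_filter, mem_Dm] at hφA
        obtain ⟨⟨hval', hinj', _⟩, _⟩ := hφA
        rw [Finset.mem_sdiff]
        constructor
        · exact hval' i (mem_insert_self _ _)
        · intro hmem
          rcases Finset.mem_image.mp hmem with ⟨k, hk, hkEq⟩
          have : ψ k = φ k := by rw [← hπ, Function.update_of_ne (hne hk)]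
          rw [this] at hkEq
          have : k = i := hinj' (by simp [Finset.coe_insert]; exact Or.inr hk)
            (by simp [Finset.coe_insert]) hkEq
          exact hi (this ▸ hk)
      · -- backward maps into source
        intro v hv
        rw [Finset.mem_sdiff] at hv
        obtain ⟨hvS, hvIm⟩ := hv
        rw [Finset.mem_filter]
        constructor
        · rw [hA, Finset.mem_filter, mem_Dm]
          refine ⟨⟨?_, ?_, ?_⟩, ?_⟩
          · intro k hk
            rcases Finset.mem_insert.mp hk with rfl | hk
            · simpa using hvS
            · rw [Function.update_of_ne (hne hk)]
              exact hval k hk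
          · intro x hx y hy hxy
            simp only [Finset.coe_insert, Set.mem_insert_iff] at hx hy
            rcases hx with rfl | hx <;> rcases hy with rfl | hy
            · rfl
            · exfalso; rw [Function.update_self, Function.update_of_ne (hne hy)] at hxy
              exact hvIm (Finset.mem_image.mpr ⟨y, hy, hxy.symm⟩)
            · exfalso; rw [Function.update_self, Function.update_of_ne (hne hx)] at hxy
              exact hvIm (Finset.mem_image.mpr ⟨x, hx, hxy⟩)
            · rw [Function.update_of_ne (hne hx),
                  Function.update_of_ne (hne hy)] at hxy
              exact hinj hx hy hxy
          · intro k hk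
            have hki : k ≠ i := fun h => hk (h ▸ mem_insert_self _ _)
            rw [Function.update_of_ne hki]
            exact hz k (fun h => hk (mem_insert_of_mem h))
          · intro l hl
            rw [Function.update_of_ne (hpigI l hl)]
            exact hsat l hl
        · funext k
          by_cases hki : k = i
          · subst hki; simp [hψi]
          · simp [Function.update_of_ne hki]
      · -- left inverse
        intro φ hφ
        rw [Finset.mem_filter] at hφ
        funext k
        by_cases hki : k = i
        · subst hki; simp
        · rw [Function.update_of_ne hki, ← hφ.2, Function.update_of_ne hki]
      · -- right inverse
        intro v _
        simp
    rw [hcard]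
    have hinter : S (ρ i) ∩ P.image ψ = (P.filter (fun k => ρ k = ρ i)).image ψ := by
      ext x
      simp only [Finset.mem_inter, Finset.mem_image, Finset.mem_filter]
      constructor
      · rintro ⟨hxS, ⟨k, hk, rfl⟩⟩
        refine ⟨k, ⟨hk, ?_⟩, rfl⟩
        by_contra hne
        exact (Finset.disjoint_left.mp (hdisj _ _ hne) (hval k hk)) hxS
      · rintro ⟨k, ⟨hk, hτ⟩, rfl⟩
        exact ⟨hτ ▸ hval k hk, ⟨k, hk, rfl⟩⟩
    have : ((S (ρ i)) \ P.image ψ).card = (S (ρ i)).card - (S (ρ i) ∩ P.image ψ).card := by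
      have := Finset.card_sdiff_add_card_inter (S (ρ i)) (P.image ψ)
      omega
    rw [this, hinter, Finset.card_image_of_injOn (hinj.mono (fun x hx => by simp only [Finset.coe_filter, Set.mem_setOf_eq] at hx; exact hx.1))]
  rw [Finset.sum_congr rfl hfiber, Finset.sum_const, smul_eq_mul]
/-- The pseudoexpectation. -/
noncomputable def Zfun (D : Conj (Fin m × Fin L)) : ℝ :=
  (NumOn S ρ (pig D) D : ℝ) / (NumOn S ρ (pig D) ∅ : ℝ)

lemma sat_empty (φ : Fin m → Fin (2 ^ L)) : sat φ (∅ : Conj (Fin m × Fin L)) := by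
  intro l hl; simp at hl

lemma sat_insert_iff (φ : Fin m → Fin (2 ^ L)) (l : Lit (Fin m × Fin L))
    (D : Conj (Fin m × Fin L)) :
    sat φ (insert l D) ↔ (((φ l.1.1 : ℕ).testBit (l.1.2 : ℕ)) = l.2 ∧ sat φ D) := by
  constructor
  · intro h
    exact ⟨h l (mem_insert_self _ _), fun x hx => h x (mem_insert_of_mem hx)⟩
  · rintro ⟨h1, h2⟩ x hx
    rcases mem_insert.mp hx with rfl | hx
    · exact h1
    · exact h2 x hx

lemma sat_mono (φ : Fin m → Fin (2 ^ L)) {D E : Conj (Fin m × Fin L)} (h : D ⊆ E)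
    (hs : sat φ E) : sat φ D := fun l hl => hs l (h hl)

lemma mem_pig {D : Conj (Fin m × Fin L)} {l : Lit (Fin m × Fin L)} (hl : l ∈ D) :
    l.1.1 ∈ pig D := mem_image.mpr ⟨l, hl, rfl⟩

lemma pig_insert (l : Lit (Fin m × Fin L)) (D : Conj (Fin m × Fin L)) :
    pig (insert l D) = insert l.1.1 (pig D) := by
  simp [pig, Finset.image_insert]

lemma pig_empty : pig (∅ : Conj (Fin m × Fin L)) = ∅ := rfl

/-- split lemma -/
lemma numOn_split (P : Finset (Fin m)) (D : Conj (Fin m × Fin L))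
    (v : Fin m × Fin L) :
    NumOn S ρ P D = NumOn S ρ P (insert (v, true) D) + NumOn S ρ P (insert (v, false) D) := by
  classical
  unfold NumOn
  have h1 : ∀ φ : Fin m → Fin (2 ^ L),
      sat φ (insert (v, true) D) ↔ (sat φ D ∧ ((φ v.1 : ℕ).testBit (v.2 : ℕ)) = true) := by
    intro φ; rw [sat_insert_iff]; tauto
  have h2 : ∀ φ : Fin m → Fin (2 ^ L),
      sat φ (insert (v, false) D) ↔ (sat φ D ∧ ¬ ((φ v.1 : ℕ).testBit (v.2 : ℕ)) = true) := by
    intro φ; rw [sat_insert_iff]; simp; tauto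
  rw [Finset.filter_congr (fun φ _ => h1 φ), Finset.filter_congr (fun φ _ => h2 φ)]
  rw [← Finset.filter_filter, ← Finset.filter_filter]
  exact (Finset.card_filter_add_card_filter_not _).symm

lemma numOn_mono (P : Finset (Fin m)) {D E : Conj (Fin m × Fin L)} (h : D ⊆ E) :
    NumOn S ρ P E ≤ NumOn S ρ P D := by
  apply Finset.card_le_card
  intro φ hφ
  rw [Finset.mem_filter] at hφ ⊢
  exact ⟨hφ.1, sat_mono φ h hφ.2⟩



lemma dm_empty_mem : (fun _ : Fin m => z0 L) ∈ Dm S ρ (∅ : Finset (Fin m)) := by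
  rw [mem_Dm]
  refine ⟨by simp, by simp [Set.InjOn], fun i _ => rfl⟩

lemma numOn_pos (hdisj : ∀ τ τ', τ ≠ τ' → Disjoint (S τ) (S τ')) {s : ℕ}
    (hS : ∀ τ, (S τ).card = s) :
    ∀ (P : Finset (Fin m)), P.card ≤ s → 0 < NumOn S ρ P (∅ : Conj (Fin m × Fin L)) := by
  intro P
  induction P using Finset.induction_on with
  | empty =>
    intro _
    apply Finset.card_pos.mpr
    exact ⟨fun _ => z0 L, Finset.mem_filter.mpr ⟨dm_empty_mem S ρ, fun l hl => by simp at hl⟩⟩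
  | @insert a P' ha IH =>
    intro hcard
    rw [numOn_ext S ρ hdisj P' a ha ∅ (by simp [pig])]
    rw [Finset.card_insert_of_notMem ha] at hcard
    apply Nat.mul_pos (IH (by omega))
    have h1 : (P'.filter (fun k => ρ k = ρ a)).card ≤ P'.card :=
      Finset.card_le_card (Finset.filter_subset _ _)
    have h2 : (S (ρ a)).card = s := hS _
    omega

lemma numOn_killed (hSsub : ∀ τ, ∀ x ∈ S τ, ((x : Fin (2 ^ L)) : ℕ).testBit (τ.1 : ℕ) = τ.2)
    {D : Conj (Fin m × Fin L)} {l : Lit (Fin m × Fin L)} (hl : l ∈ D)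
    (hkill : ρ l.1.1 = (l.1.2, !l.2)) (P : Finset (Fin m)) (hP : pig D ⊆ P) :
    NumOn S ρ P D = 0 := by
  rw [NumOn, Finset.card_eq_zero]
  rw [Finset.eq_empty_iff_forall_notMem]
  intro φ hφ
  rw [Finset.mem_filter, mem_Dm] at hφ
  obtain ⟨⟨hval, _, _⟩, hsat⟩ := hφ
  have h1 : ((φ l.1.1 : ℕ).testBit (l.1.2 : ℕ)) = l.2 := hsat l hl
  have h2 := hSsub (ρ l.1.1) _ (hval l.1.1 (hP (mem_pig hl)))
  rw [hkill] at h2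
  simp only at h2
  rw [h1] at h2
  simp at h2

lemma numOn_lift (hdisj : ∀ τ τ', τ ≠ τ' → Disjoint (S τ) (S τ')) :
    ∀ (k : ℕ) (Q : Finset (Fin m)) (D : Conj (Fin m × Fin L)), pig D ⊆ Q → Q.card ≤ k →
      NumOn S ρ Q D * NumOn S ρ (pig D) ∅ = NumOn S ρ (pig D) D * NumOn S ρ Q ∅ := by
  intro k
  induction k with
  | zero =>
    intro Q D hsub hcard
    have hQ : Q = ∅ := Finset.card_eq_zero.mp (le_antisymm hcard (Nat.zero_le _))
    subst hQ
    have hpig : pig D = ∅ := Finset.subset_empty.mp hsub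
    rw [hpig, mul_comm]
  | succ k IH =>
    intro Q D hsub hcard
    by_cases hQ : Q = pig D
    · subst hQ; rw [mul_comm]
    · have hss : pig D ⊂ Q := lt_of_le_of_ne hsub (fun h => hQ h.symm)
      obtain ⟨i, hiQ, hipig⟩ := Finset.exists_of_ssubset hss
      set Q' := Q.erase i with hQ'
      have hins : insert i Q' = Q := Finset.insert_erase hiQ
      have hiQ' : i ∉ Q' := Finset.notMem_erase i Q
      have hsub' : pig D ⊆ Q' := by
        intro x hx
        exact Finset.mem_erase.mpr ⟨fun h => hipig (h ▸ hx), hsub hx⟩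
      have hcard' : Q'.card ≤ k := by
        have h1 : Q'.card = Q.card - 1 := Finset.card_erase_of_mem hiQ
        have h2 : 0 < Q.card := Finset.card_pos.mpr ⟨i, hiQ⟩
        omega
      have e1 := numOn_ext S ρ hdisj Q' i hiQ' D hsub'
      have e2 := numOn_ext S ρ hdisj Q' i hiQ' ∅ (by simp [pig])
      rw [hins] at e1 e2
      rw [e1, e2]
      have := IH Q' D hsub' hcard'
      rw [mul_right_comm, this]
      ring

lemma pig_card_le_of_subset {D : Conj (Fin m × Fin L)} {Q : Finset (Fin m)}
    (h : pig D ⊆ Q) : (pig D).card ≤ Q.card := Finset.card_le_card h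

lemma zfun_nonneg (D : Conj (Fin m × Fin L)) : 0 ≤ Zfun S ρ D := by
  unfold Zfun
  positivity

lemma zfun_lift (hdisj : ∀ τ τ', τ ≠ τ' → Disjoint (S τ) (S τ')) {s : ℕ}
    (hS : ∀ τ, (S τ).card = s) (Q : Finset (Fin m)) (D : Conj (Fin m × Fin L))
    (hsub : pig D ⊆ Q) (hcard : Q.card ≤ s) :
    Zfun S ρ D = (NumOn S ρ Q D : ℝ) / (NumOn S ρ Q ∅ : ℝ) := by
  have hd1 : 0 < NumOn S ρ (pig D) ∅ :=
    numOn_pos S ρ hdisj hS _ (le_trans (pig_card_le_of_subset hsub) hcard)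
  have hd2 : 0 < NumOn S ρ Q ∅ := numOn_pos S ρ hdisj hS _ hcard
  rw [Zfun, div_eq_div_iff (by exact_mod_cast Nat.pos_iff_ne_zero.mp hd1)
    (by exact_mod_cast Nat.pos_iff_ne_zero.mp hd2)]
  exact_mod_cast (numOn_lift S ρ hdisj Q.card Q D hsub le_rfl).symm

lemma zfun_empty (hdisj : ∀ τ τ', τ ≠ τ' → Disjoint (S τ) (S τ')) {s : ℕ}
    (hS : ∀ τ, (S τ).card = s) : Zfun S ρ (∅ : Conj (Fin m × Fin L)) = 1 := by
  have := numOn_pos S ρ hdisj hS ∅ (Nat.zero_le _)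
  rw [Zfun, pig_empty, div_self]
  exact_mod_cast Nat.pos_iff_ne_zero.mp this


lemma pig_mono {D E : Conj (Fin m × Fin L)} (h : D ⊆ E) : pig D ⊆ pig E :=
  Finset.image_subset_image h

lemma bool_ne_iff {b c : Bool} (h : b ≠ c) : b = !c := by
  revert h; cases b <;> cases c <;> decide

lemma exists_lit_of_ne {x a : Fin (2 ^ L)} (hx : x ≠ a) :
    ∃ j : Fin L, ((x : ℕ).testBit (j : ℕ)) = !((a : ℕ).testBit (j : ℕ)) := by
  by_contra hcon
  push_neg at hcon
  apply hx
  apply Fin.ext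
  apply Nat.eq_of_testBit_eq
  intro j
  by_cases hj : j < L
  · have := hcon ⟨j, hj⟩
    have h2 : ((x : ℕ).testBit j) ≠ !((a : ℕ).testBit j) := this
    revert h2
    cases hxa : (x : ℕ).testBit j <;> cases haa : (a : ℕ).testBit j <;> simp_all
  · push_neg at hj
    have hb : (2 : ℕ) ^ L ≤ 2 ^ j := Nat.pow_le_pow_right (by norm_num) hj
    rw [Nat.testBit_lt_two_pow (lt_of_lt_of_le x.isLt hb),
        Nat.testBit_lt_two_pow (lt_of_lt_of_le a.isLt hb)]

lemma pigeon_of_mem_clause {i i' : Fin m} {a : ℕ} {l : Lit (Fin m × Fin L)}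
    (hl : l ∈ pigeonLits m L i a ∪ pigeonLits m L i' a) : l.1.1 = i ∨ l.1.1 = i' := by
  rcases Finset.mem_union.mp hl with h | h <;>
    · rcases Finset.mem_image.mp h with ⟨j, _, rfl⟩
      simp [pigeonLits]
      try exact Or.inl rfl
      try exact Or.inr rfl

lemma div_le_div_of_nonneg_right' {a b c : ℝ} (h : a ≤ b) (hc : 0 ≤ c) :
    a / c ≤ b / c := by
  rw [div_eq_mul_inv, div_eq_mul_inv]
  exact mul_le_mul_of_nonneg_right h (inv_nonneg.mpr hc)

/-- The master feasibility theorem. -/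
theorem feasible (K : ℕ)
    (hdisj : ∀ τ τ', τ ≠ τ' → Disjoint (S τ) (S τ'))
    (hS : ∀ τ, (S τ).card = K + 2)
    (hSsub : ∀ τ, ∀ x ∈ S τ, ((x : Fin (2 ^ L)) : ℕ).testBit (τ.1 : ℕ) = τ.2)
    (T : Finset (Conj (Fin m × Fin L)))
    (hT : ∀ D ∈ T, (∃ l ∈ D, ρ l.1.1 = (l.1.2, !l.2)) ∨ (pig D).card ≤ K)
    (r : ℕ) : SAFeasibleOn (BinPHP m L) r (↑T : Set (Conj (Fin m × Fin L))) := by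
  classical
  refine ⟨Zfun S ρ, zfun_empty S ρ hdisj hS, ?_, ?_, ?_⟩
  · -- monotonicity
    intro l D _ _ hlT
    refine ⟨zfun_nonneg S ρ _, ?_⟩
    rcases hT _ (Finset.mem_coe.mp hlT) with ⟨l', hl', hkill⟩ | hnarrow
    · rw [Zfun, numOn_killed S ρ hSsub hl' hkill _ le_rfl]
      simp only [Nat.cast_zero, zero_div]
      exact zfun_nonneg S ρ _
    · set Q := pig (insert l D) with hQ
      have hsubD : pig D ⊆ Q := pig_mono (Finset.subset_insert l D)
      have hQcard : Q.card ≤ K + 2 := le_trans hnarrow (by omega)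
      rw [zfun_lift S ρ hdisj hS Q D hsubD hQcard,
          zfun_lift S ρ hdisj hS Q (insert l D) le_rfl hQcard]
      have hnum := numOn_mono S ρ Q (Finset.subset_insert l D)
      have hden : (0 : ℝ) ≤ (NumOn S ρ Q ∅ : ℝ) := by positivity
      exact div_le_div_of_nonneg_right' (by exact_mod_cast hnum) hden
  · -- equalities
    intro l D _ _ hlT hnlT
    have hpigeq : pig (insert (Lit.negate l) D) = pig (insert l D) := by
      rw [pig_insert, pig_insert]; rfl
    by_cases hnar : (pig (insert l D)).card ≤ K
    · -- lift all three
      set Q := pig (insert l D) with hQ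
      have hQcard : Q.card ≤ K + 2 := le_trans hnar (by omega)
      have hsubD : pig D ⊆ Q := pig_mono (Finset.subset_insert l D)
      rw [zfun_lift S ρ hdisj hS Q D hsubD hQcard,
          zfun_lift S ρ hdisj hS Q (insert l D) le_rfl hQcard,
          zfun_lift S ρ hdisj hS Q (insert (Lit.negate l) D) (le_of_eq hpigeq) hQcard]
      have hsplit := numOn_split S ρ Q D l.1
      have hkey : NumOn S ρ Q (insert l D) + NumOn S ρ Q (insert (Lit.negate l) D)
          = NumOn S ρ Q D := by
        rcases Bool.eq_false_or_eq_true l.2 with h2 | h2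
        · have hl : l = (l.1, true) := Prod.ext_iff.mpr ⟨rfl, h2⟩
          rw [hl]
          show NumOn S ρ Q (insert (l.1, true) D) + NumOn S ρ Q (insert (l.1, !true) D)
            = NumOn S ρ Q D
          norm_num
          omega
        · have hl : l = (l.1, false) := Prod.ext_iff.mpr ⟨rfl, h2⟩
          rw [hl]
          show NumOn S ρ Q (insert (l.1, false) D) + NumOn S ρ Q (insert (l.1, !false) D)
            = NumOn S ρ Q D
          norm_num
          omega
      rw [← add_div]
      rw [← hkey]
      push_cast
      ring
    · -- both inserts killed
      have hk1 : ∃ l' ∈ insert l D, ρ l'.1.1 = (l'.1.2, !l'.2) := by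
        rcases hT _ (Finset.mem_coe.mp hlT) with h | h
        · exact h
        · exact absurd h hnar
      have hk2 : ∃ l' ∈ insert (Lit.negate l) D, ρ l'.1.1 = (l'.1.2, !l'.2) := by
        rcases hT _ (Finset.mem_coe.mp hnlT) with h | h
        · exact h
        · exact absurd (hpigeq ▸ h) hnar
      obtain ⟨l1, hl1, hkill1⟩ := hk1
      obtain ⟨l2, hl2, hkill2⟩ := hk2
      have hZ1 : Zfun S ρ (insert l D) = 0 := by
        rw [Zfun, numOn_killed S ρ hSsub hl1 hkill1 _ le_rfl]; simp
      have hZ2 : Zfun S ρ (insert (Lit.negate l) D) = 0 := by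
        rw [Zfun, numOn_killed S ρ hSsub hl2 hkill2 _ le_rfl]; simp
      have hZD : Zfun S ρ D = 0 := by
        rcases Finset.mem_insert.mp hl1 with rfl | hmem
        · rcases Finset.mem_insert.mp hl2 with rfl | hmem2
          · exfalso
            simp only [Lit.negate, Bool.not_not] at hkill2
            rw [hkill1] at hkill2
            simp [Prod.ext_iff] at hkill2
          · rw [Zfun, numOn_killed S ρ hSsub hmem2 hkill2 _ le_rfl]; simp
        · rw [Zfun, numOn_killed S ρ hSsub hmem hkill1 _ le_rfl]; simp
      rw [hZ1, hZ2, hZD]; ring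
  · -- clause constraints
    intro C hC D _ hDT _
    obtain ⟨i, i', hne, a, rfl⟩ := hC
    rcases hT _ (Finset.mem_coe.mp hDT) with ⟨l', hl', hkill⟩ | hnarrow
    · rw [Zfun, numOn_killed S ρ hSsub hl' hkill _ le_rfl]
      simp only [Nat.cast_zero, zero_div]
      exact Finset.sum_nonneg fun l _ => zfun_nonneg S ρ _
    · set Q := insert i (insert i' (pig D)) with hQdef
      have hsubD : pig D ⊆ Q := fun x hx =>
        Finset.mem_insert_of_mem (Finset.mem_insert_of_mem hx)
      have hQcard : Q.card ≤ K + 2 := by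
        calc Q.card ≤ (insert i' (pig D)).card + 1 := Finset.card_insert_le _ _
        _ ≤ ((pig D).card + 1) + 1 := by
            have := Finset.card_insert_le i' (pig D); omega
        _ ≤ K + 2 := by omega
      have hiQ : i ∈ Q := Finset.mem_insert_self _ _
      have hi'Q : i' ∈ Q := Finset.mem_insert_of_mem (Finset.mem_insert_self _ _)
      have hliftD := zfun_lift S ρ hdisj hS Q D hsubD hQcard
      have hliftl : ∀ l ∈ pigeonLits m L i a.val ∪ pigeonLits m L i' a.val,
          Zfun S ρ (insert l D)
            = (NumOn S ρ Q (insert l D) : ℝ) / (NumOn S ρ Q ∅ : ℝ) := by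
        intro l hl
        apply zfun_lift S ρ hdisj hS Q (insert l D) _ hQcard
        rw [pig_insert]
        intro x hx
        rcases Finset.mem_insert.mp hx with rfl | hx
        · rcases pigeon_of_mem_clause hl with h | h
          · rw [h]; exact hiQ
          · rw [h]; exact hi'Q
        · exact hsubD hx
      rw [hliftD, Finset.sum_congr rfl hliftl, ← Finset.sum_div]
      have hkey : NumOn S ρ Q D
          ≤ ∑ l ∈ pigeonLits m L i a.val ∪ pigeonLits m L i' a.val,
              NumOn S ρ Q (insert l D) := by
        have hsubB : (Dm S ρ Q).filter (fun φ => sat φ D)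
            ⊆ (pigeonLits m L i a.val ∪ pigeonLits m L i' a.val).biUnion
                (fun l => (Dm S ρ Q).filter (fun φ => sat φ (insert l D))) := by
          intro φ hφ
          rw [Finset.mem_filter] at hφ
          obtain ⟨hDm, hsat⟩ := hφ
          have hinj : Set.InjOn φ ↑Q := ((mem_Dm S ρ).mp hDm).2.1
          have hii' : φ i ≠ φ i' := fun h => hne (hinj (Finset.mem_coe.mpr hiQ)
            (Finset.mem_coe.mpr hi'Q) h)
          have hexists : ∃ l ∈ pigeonLits m L i a.val ∪ pigeonLits m L i' a.val,
              sat φ (insert l D) := by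
            by_cases hia : φ i = a
            · have hia' : φ i' ≠ a := fun h => hii' (hia.trans h.symm)
              obtain ⟨j, hj⟩ := exists_lit_of_ne hia'
              refine ⟨((i', j), !((a : ℕ).testBit (j : ℕ))), ?_, ?_⟩
              · apply Finset.mem_union_right
                exact Finset.mem_image.mpr ⟨j, Finset.mem_univ j, rfl⟩
              · rw [sat_insert_iff]
                exact ⟨hj, hsat⟩
            · obtain ⟨j, hj⟩ := exists_lit_of_ne hia
              refine ⟨((i, j), !((a : ℕ).testBit (j : ℕ))), ?_, ?_⟩
              · apply Finset.mem_union_left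
                exact Finset.mem_image.mpr ⟨j, Finset.mem_univ j, rfl⟩
              · rw [sat_insert_iff]
                exact ⟨hj, hsat⟩
          obtain ⟨l, hlC, hsat'⟩ := hexists
          exact Finset.mem_biUnion.mpr ⟨l, hlC, Finset.mem_filter.mpr ⟨hDm, hsat'⟩⟩
        calc NumOn S ρ Q D ≤ ((pigeonLits m L i a.val ∪ pigeonLits m L i' a.val).biUnion
                (fun l => (Dm S ρ Q).filter (fun φ => sat φ (insert l D)))).card :=
              Finset.card_le_card hsubB
        _ ≤ ∑ l ∈ pigeonLits m L i a.val ∪ pigeonLits m L i' a.val,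
              NumOn S ρ Q (insert l D) := Finset.card_biUnion_le
      have hden : (0 : ℝ) ≤ (NumOn S ρ Q ∅ : ℝ) := by positivity
      apply div_le_div_of_nonneg_right' _ hden
      exact_mod_cast hkey


/-- Greedy construction of pairwise disjoint subsets. -/
lemma greedy_disjoint {α β : Type} [DecidableEq α] [DecidableEq β] (s : ℕ) :
    ∀ (idx : Finset α) (H : α → Finset β), (∀ i ∈ idx, idx.card * s ≤ (H i).card) →
    ∃ Sf : α → Finset β, (∀ i ∈ idx, Sf i ⊆ H i) ∧ (∀ i ∈ idx, (Sf i).card = s) ∧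
      (∀ i ∈ idx, ∀ j ∈ idx, i ≠ j → Disjoint (Sf i) (Sf j)) := by
  classical
  intro idx
  induction idx using Finset.induction_on with
  | empty =>
    intro H _
    exact ⟨fun _ => ∅, by simp, by simp, by simp⟩
  | @insert a idx ha IH =>
    intro H hbig
    have hbig' : ∀ i ∈ idx, idx.card * s ≤ (H i).card := by
      intro i hi
      refine le_trans ?_ (hbig i (Finset.mem_insert_of_mem hi))
      have : idx.card ≤ (insert a idx).card := Finset.card_le_card (Finset.subset_insert _ _)
      exact Nat.mul_le_mul_right s this
    obtain ⟨Sf₀, hsub₀, hcard₀, hdisj₀⟩ := IH H hbig'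
    set U := idx.biUnion Sf₀ with hU
    have hUcard : U.card ≤ idx.card * s := by
      calc U.card ≤ ∑ i ∈ idx, (Sf₀ i).card := Finset.card_biUnion_le
      _ = ∑ _i ∈ idx, s := Finset.sum_congr rfl hcard₀
      _ = idx.card * s := by rw [Finset.sum_const, smul_eq_mul]
    have hHa : (insert a idx).card * s ≤ (H a).card := hbig a (Finset.mem_insert_self _ _)
    have hroom : s ≤ ((H a) \ U).card := by
      have h1 : (H a).card - U.card ≤ ((H a) \ U).card := Finset.le_card_sdiff _ _
      have h2 : (insert a idx).card = idx.card + 1 := Finset.card_insert_of_notMem ha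
      have := hHa
      rw [h2] at this
      have : idx.card * s + s ≤ (H a).card := by nlinarith
      omega
    obtain ⟨Sa, hSasub, hSacard⟩ := Finset.exists_subset_card_eq hroom
    refine ⟨fun i => if i = a then Sa else Sf₀ i, ?_, ?_, ?_⟩
    · intro i hi
      dsimp only
      by_cases hia : i = a
      · subst hia
        simp only [if_pos rfl]
        exact hSasub.trans (Finset.sdiff_subset)
      · rw [if_neg hia]
        exact hsub₀ i ((Finset.mem_insert.mp hi).resolve_left hia)
    · intro i hi
      dsimp only
      by_cases hia : i = a
      · subst hia; rw [if_pos rfl]; exact hSacard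
      · rw [if_neg hia]
        exact hcard₀ i ((Finset.mem_insert.mp hi).resolve_left hia)
    · intro i hi j hj hij
      dsimp only
      by_cases hia : i = a
      · subst hia
        rw [if_pos rfl, if_neg (Ne.symm hij)]
        have hjidx : j ∈ idx := (Finset.mem_insert.mp hj).resolve_left (Ne.symm hij)
        have h1 : Sf₀ j ⊆ U := Finset.subset_biUnion_of_mem Sf₀ hjidx
        exact Finset.disjoint_left.mpr (fun x hx hx' =>
          (Finset.mem_sdiff.mp (hSasub hx)).2 (h1 hx'))
      · by_cases hja : j = a
        · subst hja
          rw [if_neg hia, if_pos rfl]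
          have hiidx : i ∈ idx := (Finset.mem_insert.mp hi).resolve_left hia
          have h1 : Sf₀ i ⊆ U := Finset.subset_biUnion_of_mem Sf₀ hiidx
          exact Finset.disjoint_left.mpr (fun x hx hx' =>
            (Finset.mem_sdiff.mp (hSasub hx')).2 (h1 hx))
        · rw [if_neg hia, if_neg hja]
          exact hdisj₀ i ((Finset.mem_insert.mp hi).resolve_left hia)
            j ((Finset.mem_insert.mp hj).resolve_left hja) hij

/-- Each bit-slice of the cube has exactly half the holes. -/
lemma card_testBit_filter (L : ℕ) (j : Fin L) (b : Bool) :
    ((Finset.univ : Finset (Fin (2 ^ L))).filter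
      (fun x : Fin (2 ^ L) => x.val.testBit j.val = b)).card = 2 ^ (L - 1) := by
  classical
  have hLpos : 0 < L := j.pos
  have hpow : (2 : ℕ) ^ j.val < 2 ^ L := Nat.pow_lt_pow_right (by norm_num) j.isLt
  have hbij : ((Finset.univ : Finset (Fin (2 ^ L))).filter
        (fun x : Fin (2 ^ L) => x.val.testBit j.val = b)).card
      = ((Finset.univ : Finset (Fin (2 ^ L))).filter
        (fun x : Fin (2 ^ L) => x.val.testBit j.val = !b)).card := by
    apply Finset.card_bij'
      (fun x _ => (⟨x.val ^^^ 2 ^ j.val, Nat.xor_lt_two_pow x.isLt hpow⟩ : Fin (2 ^ L)))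
      (fun x _ => (⟨x.val ^^^ 2 ^ j.val, Nat.xor_lt_two_pow x.isLt hpow⟩ : Fin (2 ^ L)))
    · intro x hx
      rw [Finset.mem_filter] at hx ⊢
      refine ⟨Finset.mem_univ _, ?_⟩
      show (x.val ^^^ 2 ^ j.val).testBit j.val = !b
      rw [Nat.testBit_xor, Nat.testBit_two_pow_self, hx.2]
      cases b <;> rfl
    · intro x hx
      rw [Finset.mem_filter] at hx ⊢
      refine ⟨Finset.mem_univ _, ?_⟩
      show (x.val ^^^ 2 ^ j.val).testBit j.val = b
      rw [Nat.testBit_xor, Nat.testBit_two_pow_self, hx.2]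
      cases b <;> rfl
    · intro x _
      apply Fin.ext
      show (x.val ^^^ 2 ^ j.val) ^^^ 2 ^ j.val = x.val
      rw [Nat.xor_assoc]
      simp
    · intro x _
      apply Fin.ext
      show (x.val ^^^ 2 ^ j.val) ^^^ 2 ^ j.val = x.val
      rw [Nat.xor_assoc]
      simp
  have hcongr : ((Finset.univ : Finset (Fin (2 ^ L))).filter
        (fun x : Fin (2 ^ L) => ¬ x.val.testBit j.val = b)).card
      = ((Finset.univ : Finset (Fin (2 ^ L))).filter
        (fun x : Fin (2 ^ L) => x.val.testBit j.val = !b)).card := by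
    congr 1
    apply Finset.filter_congr
    intro x _
    cases hb : x.val.testBit j.val <;> cases b <;> simp
  have hsplit := Finset.card_filter_add_card_filter_not
    (s := (Finset.univ : Finset (Fin (2 ^ L))))
    (p := fun x : Fin (2 ^ L) => x.val.testBit j.val = b)
  have hcard_univ : (Finset.univ : Finset (Fin (2 ^ L))).card = 2 ^ L := by simp
  have hpow2 : (2 : ℕ) ^ L = 2 * 2 ^ (L - 1) := by
    conv_lhs => rw [show L = (L - 1) + 1 by omega]
    ring
  rw [hcard_univ, hcongr, ← hbij] at hsplit
  omega


/-- Existence of a good one-bit-per-pigeon restriction, by a union bound. -/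
lemma exists_good_rho (K : ℕ)
    (T : Finset (Conj (Fin m × Fin L)))
    (hbound : T.card * (2 * L - 1) ^ (K + 1) * (2 * L) ^ (m - (K + 1)) < (2 * L) ^ m) :
    ∃ ρ : Fin m → Fin L × Bool,
      ∀ D ∈ T, (∃ l ∈ D, ρ l.1.1 = (l.1.2, !l.2)) ∨ (pig D).card ≤ K := by
  classical
  have hcardLB : Fintype.card (Fin L × Bool) = 2 * L := by
    simp [Fintype.card_prod, mul_comm]
  set bad : Conj (Fin m × Fin L) → Finset (Fin m → Fin L × Bool) := fun D =>
    Finset.univ.filter (fun ρ =>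
      K < (pig D).card ∧ ∀ l ∈ D, ρ l.1.1 ≠ (l.1.2, !l.2)) with hbad
  have hbadcard : ∀ D ∈ T, (bad D).card ≤ (2 * L - 1) ^ (K + 1) * (2 * L) ^ (m - (K + 1)) := by
    intro D _
    by_cases hw : K < (pig D).card
    · obtain ⟨P', hP'sub, hP'card⟩ := Finset.exists_subset_card_eq (Nat.succ_le_of_lt hw)
      set t : Fin m → Finset (Fin L × Bool) := fun i =>
        if i ∈ P' then Finset.univ \ (D.filter (fun l => l.1.1 = i)).image
          (fun l => (l.1.2, !l.2)) else Finset.univ with ht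
      have hsubPi : bad D ⊆ Fintype.piFinset t := by
        intro ρ hρ
        rw [hbad, Finset.mem_filter] at hρ
        obtain ⟨-, -, hsurv⟩ := hρ
        rw [Fintype.mem_piFinset]
        intro i
        rw [ht]
        dsimp only
        by_cases hiP : i ∈ P'
        · rw [if_pos hiP, Finset.mem_sdiff]
          refine ⟨Finset.mem_univ _, ?_⟩
          intro hmem
          obtain ⟨l, hl, hleq⟩ := Finset.mem_image.mp hmem
          rw [Finset.mem_filter] at hl
          exact hsurv l hl.1 (by rw [hl.2]; exact hleq.symm)
        · rw [if_neg hiP]; exact Finset.mem_univ _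
      have hcards : ∀ i : Fin m, i ∈ P' → (t i).card ≤ 2 * L - 1 := by
        intro i hiP
        rw [ht]
        dsimp only
        rw [if_pos hiP]
        have hne : ((D.filter (fun l => l.1.1 = i)).image
            (fun l => (l.1.2, !l.2))).Nonempty := by
          obtain ⟨l, hl, hleq⟩ := Finset.mem_image.mp (hP'sub hiP)
          exact ⟨(l.1.2, !l.2), Finset.mem_image.mpr
            ⟨l, Finset.mem_filter.mpr ⟨hl, hleq⟩, rfl⟩⟩
        have h1 : 1 ≤ ((D.filter (fun l => l.1.1 = i)).image
            (fun l => (l.1.2, !l.2))).card := Finset.card_pos.mpr hne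
        have h2 := Finset.card_sdiff_of_subset (Finset.subset_univ
          ((D.filter (fun l => l.1.1 = i)).image (fun l => (l.1.2, !l.2))))
        rw [Finset.card_univ, hcardLB] at h2
        omega
      have hcards2 : ∀ i : Fin m, (t i).card ≤ 2 * L := by
        intro i
        calc (t i).card ≤ (Finset.univ : Finset (Fin L × Bool)).card :=
          Finset.card_le_card (Finset.subset_univ _)
        _ = 2 * L := by rw [Finset.card_univ, hcardLB]
      calc (bad D).card ≤ (Fintype.piFinset t).card := Finset.card_le_card hsubPi
      _ = ∏ i, (t i).card := Fintype.card_piFinset t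
      _ = (∏ i ∈ P', (t i).card) * ∏ i ∈ P'ᶜ, (t i).card :=
          (Finset.prod_mul_prod_compl P' _).symm
      _ ≤ (2 * L - 1) ^ (K + 1) * (2 * L) ^ (m - (K + 1)) := by
          apply Nat.mul_le_mul
          · calc ∏ i ∈ P', (t i).card ≤ (2 * L - 1) ^ P'.card :=
                Finset.prod_le_pow_card _ _ _ hcards
            _ = (2 * L - 1) ^ (K + 1) := by rw [hP'card]
          · calc ∏ i ∈ P'ᶜ, (t i).card ≤ (2 * L) ^ P'ᶜ.card :=
                Finset.prod_le_pow_card _ _ _ (fun i _ => hcards2 i)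
            _ = (2 * L) ^ (m - (K + 1)) := by
                rw [Finset.card_compl, hP'card, Fintype.card_fin]
    · have : bad D = ∅ := by
        rw [hbad]
        apply Finset.filter_false_of_mem
        intro ρ _
        intro hcon
        exact hw hcon.1
      rw [this]
      simp
  have huniv : (Finset.univ : Finset (Fin m → Fin L × Bool)).card = (2 * L) ^ m := by
    rw [Finset.card_univ, Fintype.card_fun, hcardLB, Fintype.card_fin]
  have hun : (T.biUnion bad).card < (Finset.univ : Finset (Fin m → Fin L × Bool)).card := by
    calc (T.biUnion bad).card ≤ ∑ D ∈ T, (bad D).card := Finset.card_biUnion_le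
    _ ≤ T.card * ((2 * L - 1) ^ (K + 1) * (2 * L) ^ (m - (K + 1))) := by
        have := Finset.sum_le_card_nsmul T (fun D => (bad D).card)
          ((2 * L - 1) ^ (K + 1) * (2 * L) ^ (m - (K + 1))) hbadcard
        simpa [smul_eq_mul] using this
    _ < (2 * L) ^ m := by rw [← mul_assoc]; exact hbound
    _ = _ := huniv.symm
  have : ¬ ((Finset.univ : Finset (Fin m → Fin L × Bool)) ⊆ T.biUnion bad) := by
    intro hsub
    exact absurd (Finset.card_le_card hsub) (not_le.mpr hun)
  obtain ⟨ρ, -, hρ⟩ := Finset.not_subset.mp this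
  refine ⟨ρ, ?_⟩
  intro D hD
  by_cases hw : K < (pig D).card
  · left
    have : ρ ∉ bad D := fun hmem => hρ (Finset.mem_biUnion.mpr ⟨D, hD, hmem⟩)
    rw [hbad, Finset.mem_filter] at this
    push_neg at this
    obtain ⟨l, hl, hkill⟩ := this (Finset.mem_univ ρ) hw
    exact ⟨l, hl, not_not.mp (fun h => h hkill)⟩
  · right
    omega


lemma pow32 : ∀ L : ℕ, 20 ≤ L → 32 * L ^ 2 ≤ 2 ^ L := by
  intro L hL
  induction L, hL using Nat.le_induction with
  | base => norm_num
  | succ n hn IH =>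
    have h1 : 32 * (n + 1) ^ 2 ≤ 2 * (32 * n ^ 2) := by nlinarith
    calc 32 * (n + 1) ^ 2 ≤ 2 * (32 * n ^ 2) := h1
    _ ≤ 2 * 2 ^ n := by omega
    _ = 2 ^ (n + 1) := by ring

/-- The final assembly: small SA systems for `BinPHP` are feasible. -/
theorem small_feasible (m L : ℕ) (hL : 20 ≤ L) (hm : 2 ^ L < m) (r : ℕ)
    (T : Finset (Conj (Fin m × Fin L)))
    (hT : (T.card : ℝ) < Real.exp ((2 ^ L : ℕ) / (32 * (L : ℝ) ^ 2))) :
    SAFeasibleOn (BinPHP m L) r (↑T : Set (Conj (Fin m × Fin L))) := by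
  classical
  have hLpos : 0 < L := by omega
  have h32 : 32 * L ^ 2 ≤ 2 ^ L := pow32 L hL
  set K := 2 ^ L / (16 * L) with hK
  -- basic K facts
  have h16L : 0 < 16 * L := by omega
  have hKle : 16 * L * K ≤ 2 ^ L := by
    rw [hK, mul_comm (16 * L)]
    exact Nat.div_mul_le_self _ _
  have hKlt : 2 ^ L < 16 * L * (K + 1) := by
    have h2 := Nat.div_add_mod (2 ^ L) (16 * L)
    have h3 : 2 ^ L % (16 * L) < 16 * L := Nat.mod_lt _ h16L
    calc 2 ^ L = 16 * L * K + 2 ^ L % (16 * L) := by rw [hK]; omega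
    _ < 16 * L * K + 16 * L := by omega
    _ = 16 * L * (K + 1) := by ring
  have hKm : K + 1 ≤ m := by
    have : K < 2 ^ L := by
      rw [hK]
      exact Nat.div_lt_self (Nat.two_pow_pos L) (by omega)
    omega
  -- the real-number union bound
  have hbound : T.card * (2 * L - 1) ^ (K + 1) * (2 * L) ^ (m - (K + 1)) < (2 * L) ^ m := by
    set a : ℝ := ((2 * L : ℕ) : ℝ) with haa
    have ha1 : (1 : ℝ) < a := by
      rw [haa]
      exact_mod_cast (by omega : 1 < 2 * L)
    have ha0 : (0 : ℝ) < a := lt_trans one_pos ha1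
    have hb : (0 : ℝ) < 1 - 1 / a := by
      rw [sub_pos, div_lt_one ha0]
      exact ha1
    -- exp(1/a) ≤ a/(a-1)
    have hexp1 : Real.exp (1 / a) ≤ a / (a - 1) := by
      have h1 : 1 - 1 / a ≤ Real.exp (-(1 / a)) := by
        have := Real.add_one_le_exp (-(1 / a))
        linarith
      have h2 : (1 - 1 / a) * Real.exp (1 / a) ≤ 1 := by
        calc (1 - 1 / a) * Real.exp (1 / a)
            ≤ Real.exp (-(1 / a)) * Real.exp (1 / a) := by
              exact mul_le_mul_of_nonneg_right h1 (le_of_lt (Real.exp_pos _))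
        _ = 1 := by rw [← Real.exp_add]; norm_num
      have h3 : Real.exp (1 / a) ≤ 1 / (1 - 1 / a) := by
        rw [le_div_iff₀ hb]
        linarith [h2]
      have h4 : 1 / (1 - 1 / a) = a / (a - 1) := by
        field_simp
      rw [← h4]
      exact h3
    -- exp(2^L/(32 L^2)) ≤ (a/(a-1))^(K+1)
    have hediv : ((2 ^ L : ℕ) : ℝ) / (32 * (L : ℝ) ^ 2) ≤ ((K + 1 : ℕ) : ℝ) / a := by
      rw [div_le_div_iff₀ (by positivity) ha0, haa]
      have hcast : ((2 ^ L : ℕ) : ℝ) < 16 * (L : ℝ) * ((K + 1 : ℕ) : ℝ) := by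
        exact_mod_cast hKlt
      have hL0 : (0 : ℝ) < (L : ℝ) := by exact_mod_cast hLpos
      push_cast at hcast ⊢
      nlinarith [mul_le_mul_of_nonneg_right (le_of_lt hcast) (le_of_lt hL0), hL0]
    have hexp2 : Real.exp (((2 ^ L : ℕ) : ℝ) / (32 * (L : ℝ) ^ 2)) ≤ (a / (a - 1)) ^ (K + 1) := by
      calc Real.exp (((2 ^ L : ℕ) : ℝ) / (32 * (L : ℝ) ^ 2))
          ≤ Real.exp (((K + 1 : ℕ) : ℝ) / a) := Real.exp_le_exp.mpr hediv
      _ = Real.exp ((K + 1 : ℕ) * (1 / a)) := by ring_nf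
      _ = (Real.exp (1 / a)) ^ (K + 1) := Real.exp_nat_mul _ _
      _ ≤ (a / (a - 1)) ^ (K + 1) := by
          apply pow_le_pow_left₀ (le_of_lt (Real.exp_pos _)) hexp1
    have hTlt : (T.card : ℝ) < a ^ (K + 1) / (a - 1) ^ (K + 1) := by
      calc (T.card : ℝ) < Real.exp ((2 ^ L : ℕ) / (32 * (L : ℝ) ^ 2)) := hT
      _ ≤ (a / (a - 1)) ^ (K + 1) := hexp2
      _ = a ^ (K + 1) / (a - 1) ^ (K + 1) := div_pow a _ _
    have ham1 : (0 : ℝ) < a - 1 := by linarith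
    have hreal : (T.card : ℝ) * (a - 1) ^ (K + 1) * a ^ (m - (K + 1)) < a ^ m := by
      have h5 : (T.card : ℝ) * (a - 1) ^ (K + 1) < a ^ (K + 1) :=
        (lt_div_iff₀ (by positivity)).mp hTlt
      calc (T.card : ℝ) * (a - 1) ^ (K + 1) * a ^ (m - (K + 1))
          < a ^ (K + 1) * a ^ (m - (K + 1)) := by
            apply mul_lt_mul_of_pos_right h5 (by positivity)
      _ = a ^ m := by rw [← pow_add]; congr 1; omega
    have hc1 : ((2 * L - 1 : ℕ) : ℝ) = a - 1 := by
      rw [haa]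
      push_cast [Nat.cast_sub (by omega : 1 ≤ 2 * L)]
      ring
    have hgoal : ((T.card : ℕ) : ℝ) * ((2 * L - 1 : ℕ) : ℝ) ^ (K + 1)
        * ((2 * L : ℕ) : ℝ) ^ (m - (K + 1)) < ((2 * L : ℕ) : ℝ) ^ m := by
      rw [hc1]
      exact hreal
    exact_mod_cast hgoal
  obtain ⟨ρ, hρ⟩ := exists_good_rho K T hbound
  -- construct the disjoint hole sets
  set H : Fin L × Bool → Finset (Fin (2 ^ L)) := fun τ =>
    Finset.univ.filter (fun x : Fin (2 ^ L) => x.val.testBit τ.1.val = τ.2) with hH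
  have hHcard : ∀ τ, (H τ).card = 2 ^ (L - 1) := fun τ => card_testBit_filter L τ.1 τ.2
  have hbig : ∀ τ ∈ (Finset.univ : Finset (Fin L × Bool)),
      (Finset.univ : Finset (Fin L × Bool)).card * (K + 2) ≤ (H τ).card := by
    intro τ _
    rw [hHcard τ, Finset.card_univ]
    have hcardLB : Fintype.card (Fin L × Bool) = 2 * L := by
      simp [Fintype.card_prod, mul_comm]
    rw [hcardLB]
    -- 2L(K+2) ≤ 2^(L-1)
    have p1 : 16 * L * K ≤ 2 ^ L := hKle
    have p2 : 32 * L ≤ 2 ^ L := by nlinarith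
    have p3 : 2 * 2 ^ (L - 1) = 2 ^ L := by
      conv_rhs => rw [show L = (L - 1) + 1 by omega]
      ring
    nlinarith
  obtain ⟨S, hSsub0, hScard0, hSdisj0⟩ :=
    greedy_disjoint (K + 2) (Finset.univ : Finset (Fin L × Bool)) H hbig
  have hdisj : ∀ τ τ', τ ≠ τ' → Disjoint (S τ) (S τ') := fun τ τ' h =>
    hSdisj0 τ (Finset.mem_univ _) τ' (Finset.mem_univ _) h
  have hScard : ∀ τ, (S τ).card = K + 2 := fun τ => hScard0 τ (Finset.mem_univ _)
  have hSsub : ∀ τ, ∀ x ∈ S τ, (x : Fin (2 ^ L)).val.testBit τ.1.val = τ.2 := by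
    intro τ x hx
    have := hSsub0 τ (Finset.mem_univ _) hx
    rw [hH] at this
    exact (Finset.mem_filter.mp this).2
  exact feasible S ρ K hdisj hScard hSsub T hρ r

end BPHPaux

/-- **Sherali–Adams size lower bound for the weak binary pigeonhole principle.**  For
all sufficiently large powers of two `n = 2^L` and every `m > n`, every Sherali–Adams
refutation of `BinPHP^m_n` contains at least `e^(n/(32·(log n)²))` terms. -/
theorem binphp_weak_sa_size_lower_bound :
    ∃ N : ℕ, ∀ L n m : ℕ, n = 2 ^ L → N ≤ n → n < m →
      ∀ (r : ℕ) (T : Finset (Conj (Fin m × Fin L))),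
        ¬ SAFeasibleOn (BinPHP m L) r (↑T : Set (Conj (Fin m × Fin L))) →
        Real.exp ((n : ℝ) / (32 * (L : ℝ) ^ 2)) ≤ (T.card : ℝ) := by
  refine ⟨2 ^ 20, ?_⟩
  intro L n m hn hN hm r T hinfeas
  by_contra hlt
  push_neg at hlt
  apply hinfeas
  subst hn
  have hL : 20 ≤ L := by
    by_contra h
    push_neg at h
    have : (2 : ℕ) ^ L < 2 ^ 20 := Nat.pow_lt_pow_right (by norm_num) (by omega)
    omega
  exact BPHPaux.small_feasible m L hL hm r T (by exact_mod_cast hlt)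
end PC
end
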